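/- arXiv:1005.4124 — 8 statements merged into one kernel-verified Lean document; each statement's English description precedes it below -/
import Mathlib

section
/- Let Q be a self-adjoint contraction on L²(π) with spectral measure μ_g associated to g ∈ L²₀(π), and define σ_n² = (2⟨g,V̄_n g⟩ - ‖g‖²)n. If liminf_{n→∞} σ_n²/n < ∞, then ∫ dμ_g(λ)/(1-λ) < ∞ and lim_{n→∞} σ_n²/n = ∫ (1+λ)/(1-λ) dμ_g(λ) ∈ [0,∞). -/
/-!
Writing `K_n(λ) = (2/n) ∑_{k<n} (n-k) λ^k - 1`, so that `2V̄_n - 1 = K_n(Q)`, the moment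
identities give `σ_n²/n = ∫ K_n dμ`. The identity `(1-λ)² ∑_{k<n} (n-k) λ^k = n(1-λ) - λ(1-λ^n)`
shows `K_n(λ) → (1+λ)/(1-λ)` on `[-1,1)` with `|K_n(λ)| ≤ 4/(1-λ)`, while `K_n(1) = n`.
Since partial geometric sums are nonnegative on `[-1,∞)`, `K_n ≥ -1`, and Fatou's lemma for
`K_n + 1 → 2/(1-λ)` (which is `∞` at `λ = 1`) turns the bound `∫ K_n dμ ≤ C`, valid for
infinitely many `n`, into `∫ dμ/(1-λ) < ∞`; in particular `μ{1} = 0`, and dominated convergence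
with the bound `4/(1-λ)` gives the limit.
-/

open MeasureTheory Filter Finset Topology
open scoped ENNReal RealInnerProductSpace

noncomputable def weightedGeomSum (n : ℕ) (l : ℝ) : ℝ := ∑ k ∈ range n, ((n : ℝ) - k) * l ^ k

noncomputable def varianceKernel (n : ℕ) (l : ℝ) : ℝ := 2 * (n : ℝ)⁻¹ * weightedGeomSum n l - 1

namespace weightedGeomSum

variable {n : ℕ} {l : ℝ}

@[simp] lemma zero_left (l : ℝ) : weightedGeomSum 0 l = 0 := by simp [weightedGeomSum]

lemma succ_left (n : ℕ) (l : ℝ) :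
    weightedGeomSum (n + 1) l = weightedGeomSum n l + ∑ k ∈ range (n + 1), l ^ k := by
  have hsplit (k : ℕ) : (((n + 1 : ℕ) : ℝ) - k) * l ^ k = ((n : ℝ) - k) * l ^ k + l ^ k := by
    push_cast; ring
  simp only [weightedGeomSum, hsplit, sum_add_distrib,
    sum_range_succ (fun k => ((n : ℝ) - k) * l ^ k), sub_self, zero_mul, add_zero]

lemma nonneg (hl : -1 ≤ l) : 0 ≤ weightedGeomSum n l := by
  induction n with
  | zero => simp
  | succ n ih =>
    have hgeom : 0 ≤ ∑ k ∈ range (n + 1), l ^ k :=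
      not_lt.1 fun h => ((geom_sum_neg_iff n.succ_ne_zero).1 h).2.not_ge (by linarith)
    rw [succ_left]; positivity

lemma one_sub_mul_le (hl : |l| ≤ 1) : (1 - l) * weightedGeomSum n l ≤ 2 * n := by
  induction n with
  | zero => simp
  | succ n ih =>
    have hpow : -1 ≤ l ^ (n + 1) :=
      (abs_le.1 (abs_pow l (n + 1) ▸ pow_le_one₀ (abs_nonneg l) hl)).1
    rw [succ_left, mul_add, mul_neg_geom_sum]
    push_cast; linarith

lemma one_sub_sq_mul (n : ℕ) (l : ℝ) :
    (1 - l) ^ 2 * weightedGeomSum n l = n * (1 - l) - l * (1 - l ^ n) := by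
  induction n with
  | zero => simp
  | succ n ih =>
    rw [succ_left, mul_add, ih, sq, mul_assoc, mul_neg_geom_sum]
    push_cast; ring

lemma two_mul_one_right (n : ℕ) : 2 * weightedGeomSum n 1 = n * (n + 1) := by
  induction n with
  | zero => simp
  | succ n ih =>
    rw [succ_left, mul_add, ih]
    simp only [one_pow, sum_const, card_range, nsmul_eq_mul, mul_one]
    push_cast; ring

end weightedGeomSum

namespace varianceKernel

variable {n : ℕ} {l : ℝ}

lemma one_right (hn : n ≠ 0) : varianceKernel n 1 = n := by
  have hn' : (n : ℝ) ≠ 0 := Nat.cast_ne_zero.2 hn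
  rw [varianceKernel, mul_right_comm, weightedGeomSum.two_mul_one_right]
  field_simp
  ring

lemma neg_one_le (hl : -1 ≤ l) : -1 ≤ varianceKernel n l := by
  have := weightedGeomSum.nonneg (n := n) hl
  rw [varianceKernel, le_sub_iff_add_le, neg_add_cancel]
  positivity

lemma le_four_div (hl : l ∈ Set.Ico (-1 : ℝ) 1) : varianceKernel n l ≤ 4 / (1 - l) := by
  have h1 : 0 < 1 - l := sub_pos.2 hl.2
  rcases Nat.eq_zero_or_pos n with rfl | hn
  · simp only [varianceKernel, weightedGeomSum.zero_left, mul_zero, zero_sub]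
    linarith [div_pos four_pos h1]
  have hS := weightedGeomSum.one_sub_mul_le (n := n) (abs_le.2 ⟨hl.1, hl.2.le⟩)
  rw [varianceKernel, le_div_iff₀ h1]
  have hn' : (0 : ℝ) < n := Nat.cast_pos.2 hn
  calc (2 * (n : ℝ)⁻¹ * weightedGeomSum n l - 1) * (1 - l)
      ≤ 2 * (n : ℝ)⁻¹ * ((1 - l) * weightedGeomSum n l) := by nlinarith
    _ ≤ 2 * (n : ℝ)⁻¹ * (2 * n) := by gcongr
    _ = 4 := by field_simp; ring

lemma abs_le_four_div (hl : l ∈ Set.Ico (-1 : ℝ) 1) : |varianceKernel n l| ≤ 4 / (1 - l) := by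
  have h1 : 0 < 1 - l := sub_pos.2 hl.2
  have : 1 ≤ 4 / (1 - l) := by rw [le_div_iff₀ h1]; linarith [hl.1]
  exact abs_le.2 ⟨by linarith [neg_one_le (n := n) hl.1], le_four_div hl⟩

lemma eq_sub (hn : n ≠ 0) (hl : l ≠ 1) :
    varianceKernel n l = (1 + l) / (1 - l) - 2 * l * (1 - l ^ n) / (n * (1 - l) ^ 2) := by
  have h1 : 1 - l ≠ 0 := sub_ne_zero.2 hl.symm
  have hn' : (n : ℝ) ≠ 0 := Nat.cast_ne_zero.2 hn
  have hS : weightedGeomSum n l = (n * (1 - l) - l * (1 - l ^ n)) / (1 - l) ^ 2 := by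
    rw [eq_div_iff (pow_ne_zero 2 h1), mul_comm]
    exact weightedGeomSum.one_sub_sq_mul n l
  rw [varianceKernel, hS]
  field_simp
  ring

lemma tendsto (hl : l ∈ Set.Ico (-1 : ℝ) 1) :
    Tendsto (fun n => varianceKernel n l) atTop (𝓝 ((1 + l) / (1 - l))) := by
  have h1 : 0 < 1 - l := sub_pos.2 hl.2
  have hl' : |l| ≤ 1 := abs_le.2 ⟨hl.1, hl.2.le⟩
  have hlim : Tendsto (fun n : ℕ => 4 / (1 - l) ^ 2 / n) atTop (𝓝 0) :=
    tendsto_const_div_atTop_nhds_zero_nat _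
  have herr : Tendsto (fun n => varianceKernel n l - (1 + l) / (1 - l)) atTop (𝓝 0) := by
    refine squeeze_zero_norm' ?_ hlim
    filter_upwards [eventually_ne_atTop 0] with n hn
    have hn' : (0 : ℝ) < n := Nat.cast_pos.2 (Nat.pos_of_ne_zero hn)
    have hpow : |l ^ n| ≤ 1 := abs_pow l n ▸ pow_le_one₀ (abs_nonneg l) hl'
    have hnum : |2 * l * (1 - l ^ n)| ≤ 4 := by
      rw [abs_mul, abs_mul, abs_two]
      calc 2 * |l| * |1 - l ^ n| ≤ 2 * 1 * (|1| + |l ^ n|) := by gcongr; exact abs_sub _ _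
        _ ≤ 4 := by rw [abs_one]; linarith
    rw [eq_sub hn hl.2.ne, sub_sub_cancel_left, norm_neg, Real.norm_eq_abs, abs_div,
      abs_of_pos (by positivity : (0 : ℝ) < n * (1 - l) ^ 2), div_div, mul_comm ((1 - l) ^ 2)]
    gcongr
  simpa using herr.add_const ((1 + l) / (1 - l))

lemma tendsto_ofReal_add_one (hl : l ∈ Set.Icc (-1 : ℝ) 1) :
    Tendsto (fun n => ENNReal.ofReal (varianceKernel n l + 1)) atTop
      (𝓝 (2 * (ENNReal.ofReal (1 - l))⁻¹)) := by
  rcases hl.2.lt_or_eq with hlt | rfl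
  · have h1 : 0 < 1 - l := sub_pos.2 hlt
    have hval : (1 + l) / (1 - l) + 1 = 2 * (1 - l)⁻¹ := by field_simp; ring
    rw [← ENNReal.ofReal_inv_of_pos h1, ← ENNReal.ofReal_ofNat 2, ← ENNReal.ofReal_mul zero_le_two,
      ← hval]
    exact (ENNReal.continuous_ofReal.tendsto _).comp ((tendsto ⟨hl.1, hlt⟩).add_const 1)
  · rw [sub_self, ENNReal.ofReal_zero, ENNReal.inv_zero, ENNReal.mul_top two_ne_zero]
    refine ENNReal.tendsto_ofReal_atTop.comp ?_
    refine (tendsto_atTop_add_const_right _ 1 tendsto_natCast_atTop_atTop).congr' ?_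
    filter_upwards [eventually_ne_atTop 0] with n hn
    rw [one_right hn]

end varianceKernel

lemma inner_sum_smul_pow_apply_eq_integral {E : Type*} [NormedAddCommGroup E]
    [InnerProductSpace ℝ E] (Q : E →L[ℝ] E) (g : E) {μ : Measure ℝ}
    (hint : ∀ k : ℕ, Integrable (fun l => l ^ k) μ) (hmom : ∀ k : ℕ, ⟪g, (Q ^ k) g⟫ = ∫ l, l ^ k ∂μ)
    (s : Finset ℕ) (c : ℕ → ℝ) :
    ⟪g, (∑ k ∈ s, c k • Q ^ k) g⟫ = ∫ l, ∑ k ∈ s, c k * l ^ k ∂μ := by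
  rw [integral_finsetSum s fun k _ => (hint k).const_mul (c k)]
  simp only [FunLike.coe_sum, Finset.sum_apply, FunLike.coe_smul, Pi.smul_apply, inner_sum,
    real_inner_smul_right, hmom, integral_const_mul]

section

variable {μ : Measure ℝ}

lemma integrable_pow_of_ae_mem_Icc [IsFiniteMeasure μ] (hμ : ∀ᵐ l ∂μ, l ∈ Set.Icc (-1 : ℝ) 1)
    (k : ℕ) : Integrable (fun l => l ^ k) μ :=
  Integrable.of_bound (by fun_prop) 1 <| hμ.mono fun l hl => by
    rw [Real.norm_eq_abs, abs_pow]
    exact pow_le_one₀ (abs_nonneg l) (abs_le.2 hl)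

lemma integrable_weightedGeomSum [IsFiniteMeasure μ] (hμ : ∀ᵐ l ∂μ, l ∈ Set.Icc (-1 : ℝ) 1)
    (n : ℕ) : Integrable (weightedGeomSum n) μ :=
  integrable_finsetSum _ fun k _ => (integrable_pow_of_ae_mem_Icc hμ k).const_mul _

lemma integrable_varianceKernel [IsFiniteMeasure μ] (hμ : ∀ᵐ l ∂μ, l ∈ Set.Icc (-1 : ℝ) 1)
    (n : ℕ) : Integrable (varianceKernel n) μ :=
  ((integrable_weightedGeomSum hμ n).const_mul _).sub (integrable_const 1)

lemma integral_varianceKernel [IsFiniteMeasure μ] (hμ : ∀ᵐ l ∂μ, l ∈ Set.Icc (-1 : ℝ) 1)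
    (n : ℕ) : ∫ l, varianceKernel n l ∂μ
      = 2 * ((n : ℝ)⁻¹ * ∫ l, weightedGeomSum n l ∂μ) - μ.real Set.univ := by
  unfold varianceKernel
  rw [integral_sub ((integrable_weightedGeomSum hμ n).const_mul _) (integrable_const 1),
    integral_const_mul, integral_const, smul_eq_mul, mul_one, mul_assoc]

lemma measurable_varianceKernel (n : ℕ) : Measurable (varianceKernel n) := by
  unfold varianceKernel weightedGeomSum; fun_prop

lemma lintegral_inv_one_sub_lt_top_of_frequently_le [IsFiniteMeasure μ]
    (hμ : ∀ᵐ l ∂μ, l ∈ Set.Icc (-1 : ℝ) 1) {C : ℝ}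
    (hC : ∃ᶠ n in atTop, ∫ l, varianceKernel n l ∂μ ≤ C) :
    ∫⁻ l, (ENNReal.ofReal (1 - l))⁻¹ ∂μ < ⊤ := by
  have hlintegral (n : ℕ) : ∫⁻ l, ENNReal.ofReal (varianceKernel n l + 1) ∂μ
      = ENNReal.ofReal (∫ l, varianceKernel n l ∂μ + μ.real Set.univ) := by
    have hint : Integrable (fun l => varianceKernel n l + 1) μ :=
      (integrable_varianceKernel hμ n).add (integrable_const 1)
    have hnonneg : 0 ≤ᵐ[μ] fun l => varianceKernel n l + 1 :=
      hμ.mono fun l hl => neg_le_iff_add_nonneg.1 (varianceKernel.neg_one_le hl.1)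
    rw [← ofReal_integral_eq_lintegral_ofReal hint hnonneg,
      integral_add (integrable_varianceKernel hμ n) (integrable_const 1), integral_const,
      smul_eq_mul, mul_one]
  calc ∫⁻ l, (ENNReal.ofReal (1 - l))⁻¹ ∂μ
      ≤ ∫⁻ l, 2 * (ENNReal.ofReal (1 - l))⁻¹ ∂μ :=
        lintegral_mono fun l => le_mul_of_one_le_left' one_le_two
    _ = ∫⁻ l, liminf (fun n => ENNReal.ofReal (varianceKernel n l + 1)) atTop ∂μ :=
        lintegral_congr_ae <| hμ.mono fun l hl =>
          (varianceKernel.tendsto_ofReal_add_one hl).liminf_eq.symm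
    _ ≤ liminf (fun n => ∫⁻ l, ENNReal.ofReal (varianceKernel n l + 1) ∂μ) atTop :=
        lintegral_liminf_le fun n => ((measurable_varianceKernel n).add_const 1).ennreal_ofReal
    _ ≤ ENNReal.ofReal (C + μ.real Set.univ) :=
        liminf_le_of_frequently_le' <| hC.mono fun n hn => by rw [hlintegral]; gcongr
    _ < ⊤ := ENNReal.ofReal_lt_top

lemma tendsto_integral_varianceKernel (hμ : ∀ᵐ l ∂μ, l ∈ Set.Icc (-1 : ℝ) 1)
    (hfin : ∫⁻ l, (ENNReal.ofReal (1 - l))⁻¹ ∂μ < ⊤) :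
    Tendsto (fun n => ∫ l, varianceKernel n l ∂μ) atTop (𝓝 (∫ l, (1 + l) / (1 - l) ∂μ)) := by
  have hmeas : Measurable fun l : ℝ => (ENNReal.ofReal (1 - l))⁻¹ := by fun_prop
  have hlt : ∀ᵐ l ∂μ, l ∈ Set.Ico (-1 : ℝ) 1 := by
    filter_upwards [hμ, ae_lt_top hmeas hfin.ne] with l hl hl_fin
    refine ⟨hl.1, hl.2.lt_of_ne ?_⟩
    rintro rfl
    simp at hl_fin
  have hbound : Integrable (fun l => 4 / (1 - l)) μ := by
    refine ((integrable_toReal_of_lintegral_ne_top hmeas.aemeasurable hfin.ne).const_mul 4).congr ?_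
    filter_upwards [hlt] with l hl
    rw [ENNReal.toReal_inv, ENNReal.toReal_ofReal (sub_pos.2 hl.2).le, div_eq_mul_inv]
  exact tendsto_integral_of_dominated_convergence _
    (fun n => (measurable_varianceKernel n).aestronglyMeasurable) hbound
    (fun n => hlt.mono fun l hl => varianceKernel.abs_le_four_div hl)
    (hlt.mono fun l hl => varianceKernel.tendsto hl)

end

theorem limit_of_variance_over_n_general
    {E : Type*} [NormedAddCommGroup E] [InnerProductSpace ℝ E]
    (Q : E →L[ℝ] E)
    (g : E) (μ : Measure ℝ) [IsFiniteMeasure μ]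
    (hsupp : μ (Set.Icc (-1 : ℝ) 1)ᶜ = 0)
    (hmom : ∀ k : ℕ, ⟪g, (Q ^ k) g⟫ = ∫ l, l ^ k ∂μ)
    (σsq : ℕ → ℝ)
    (hσdef : ∀ n : ℕ, σsq n
      = (2 * ⟪g, (((n : ℝ)⁻¹ • ∑ k ∈ Finset.range n, ((n : ℝ) - k) • (Q ^ k)) g)⟫
          - ‖g‖ ^ 2) * n)
    (hliminf : ∃ C : ℝ, ∃ᶠ n in atTop, σsq n / n ≤ C) :
    (∫⁻ l, (ENNReal.ofReal (1 - l))⁻¹ ∂μ < ⊤) ∧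
    Tendsto (fun n : ℕ => σsq n / n) atTop (𝓝 (∫ l, (1 + l) / (1 - l) ∂μ)) := by
  have hμ : ∀ᵐ l ∂μ, l ∈ Set.Icc (-1 : ℝ) 1 := mem_ae_iff.2 hsupp
  have hnorm : ‖g‖ ^ 2 = μ.real Set.univ := by
    simpa [real_inner_self_eq_norm_sq] using hmom 0
  have hσ : ∀ n ≠ 0, σsq n / n = ∫ l, varianceKernel n l ∂μ := by
    intro n hn
    rw [hσdef, mul_div_cancel_right₀ _ (Nat.cast_ne_zero.2 hn), FunLike.coe_smul, Pi.smul_apply,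
      real_inner_smul_right, inner_sum_smul_pow_apply_eq_integral Q g
        (integrable_pow_of_ae_mem_Icc hμ) hmom, hnorm, integral_varianceKernel hμ]
    rfl
  obtain ⟨C, hC⟩ := hliminf
  have hfin := lintegral_inv_one_sub_lt_top_of_frequently_le hμ <|
    hC.mp <| (eventually_ne_atTop 0).mono fun n hn h => hσ n hn ▸ h
  refine ⟨hfin, (tendsto_integral_varianceKernel hμ hfin).congr' ?_⟩
  filter_upwards [eventually_ne_atTop 0] with n hn using (hσ n hn).symm

/-- with `σ_n² = (2⟨g, V̄_n g⟩ - ‖g‖²) n` and `μ = μ_g` the spectral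
measure of `g` for the self-adjoint contraction `Q`, if `liminf σ_n²/n < ∞`
(i.e. `σ_n²/n ≤ C` frequently), then `∫ dμ(λ)/(1-λ) < ∞` and
`σ_n²/n → ∫ (1+λ)/(1-λ) dμ(λ)`. -/
theorem limit_of_variance_over_n
    {E : Type*} [NormedAddCommGroup E] [InnerProductSpace ℝ E]
    (Q : E →L[ℝ] E) (hsa : ∀ x y : E, ⟪Q x, y⟫ = ⟪x, Q y⟫) (hQ : ‖Q‖ ≤ 1)
    (g : E) (μ : Measure ℝ) [IsFiniteMeasure μ]
    (hsupp : μ (Set.Icc (-1 : ℝ) 1)ᶜ = 0)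
    (hmom : ∀ k : ℕ, ⟪g, (Q ^ k) g⟫ = ∫ l, l ^ k ∂μ)
    (σsq : ℕ → ℝ)
    (hσdef : ∀ n : ℕ, σsq n
      = (2 * ⟪g, (((n : ℝ)⁻¹ • ∑ k ∈ Finset.range n, ((n : ℝ) - k) • (Q ^ k)) g)⟫
          - ‖g‖ ^ 2) * n)
    (hliminf : ∃ C : ℝ, ∃ᶠ n in atTop, σsq n / n ≤ C) :
    (∫⁻ l, (ENNReal.ofReal (1 - l))⁻¹ ∂μ < ⊤) ∧
    Tendsto (fun n : ℕ => σsq n / n) atTop (𝓝 (∫ l, (1 + l) / (1 - l) ∂μ)) :=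
  limit_of_variance_over_n_general Q g μ hsupp hmom σsq hσdef hliminf
end

section
/- For a reversible stationary Markov chain, if Qg = -g for g ∈ L²₀(π), then X_n = -X_{n-1} almost surely (where X_k = g(W_k)) and hence S_n = (1/2)[1+(-1)^{n-1}]X_1 almost surely. -/
open MeasureTheory Filter Finset

/-!
Stationarity gives `E[X_k²] = E[X_{k+1}²] = ∫ g² dπ`, while `Q g = -g` turns the lag-one
covariance `E[X_k X_{k+1}] = ∫ g Q g dπ` into `-∫ g² dπ`. Hence `E[(X_k + X_{k+1})²] = 0`,
i.e. `X_{k+1} = -X_k` almost surely, and the partial sums of an alternating sequence are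
`X_1` or `0` according to the parity of `n`.
-/

section Alternating

theorem apply_add_eq_neg_one_pow_mul {R : Type*} [Ring R] {x : ℕ → R}
    (hx : ∀ k, x (k + 1) = -x k) (j k : ℕ) : x (j + k) = (-1) ^ k * x j := by
  induction k with
  | zero => simp
  | succ k ih => rw [← add_assoc, hx, ih, pow_succ, mul_neg_one, neg_mul]

theorem sum_Icc_one_of_succ_eq_neg {K : Type*} [Field K] [CharZero K] {x : ℕ → K}
    (hx : ∀ k, x (k + 1) = -x k) {n : ℕ} (hn : 1 ≤ n) :
    ∑ k ∈ Icc 1 n, x k = 1 / 2 * (1 + (-1) ^ (n - 1)) * x 1 := by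
  obtain ⟨m, rfl⟩ := Nat.exists_eq_add_of_le' hn
  rw [Nat.add_sub_cancel]
  induction m with
  | zero => norm_num
  | succ m ih =>
    rw [sum_Icc_succ_top (by omega), ih (by omega), add_comm (m + 1) 1,
      apply_add_eq_neg_one_pow_mul hx, pow_succ]
    ring

end Alternating

section SecondMoments

variable {Ω : Type*} [MeasurableSpace Ω] {P : Measure Ω}

theorem ae_eq_neg_of_integral_mul_eq_neg {X Y : Ω → ℝ} (hX : MemLp X 2 P) (hY : MemLp Y 2 P)
    (hXY : ∫ ω, X ω * Y ω ∂P = -∫ ω, X ω ^ 2 ∂P) (hYY : ∫ ω, Y ω ^ 2 ∂P = ∫ ω, X ω ^ 2 ∂P) :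
    Y =ᵐ[P] -X := by
  have hXXi := hX.integrable_sq
  have hXXYYi : Integrable (fun ω => X ω ^ 2 + Y ω ^ 2) P := hXXi.add hY.integrable_sq
  have hXYi : Integrable (fun ω => 2 * (X ω * Y ω)) P := (hX.integrable_mul hY).const_mul 2
  have hsum_sq : ∫ ω, (X ω + Y ω) ^ 2 ∂P = 0 := by
    calc ∫ ω, (X ω + Y ω) ^ 2 ∂P
        = ∫ ω, (X ω ^ 2 + Y ω ^ 2 + 2 * (X ω * Y ω)) ∂P := by congr 1; ext ω; ring
      _ = ∫ ω, X ω ^ 2 ∂P + ∫ ω, Y ω ^ 2 ∂P + 2 * ∫ ω, X ω * Y ω ∂P := by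
          rw [integral_add hXXYYi hXYi, integral_add hXXi hY.integrable_sq,
            integral_const_mul]
      _ = 0 := by rw [hXY, hYY]; ring
  have hsum_sq_ae : (fun ω => (X ω + Y ω) ^ 2) =ᵐ[P] 0 :=
    (integral_eq_zero_iff_of_nonneg (fun ω => sq_nonneg _) (hX.add hY).integrable_sq).1 hsum_sq
  filter_upwards [hsum_sq_ae] with ω hω
  have : X ω + Y ω = 0 := pow_eq_zero_iff two_ne_zero |>.1 hω
  simp only [Pi.neg_apply]
  linarith

end SecondMoments

theorem Qg_eq_neg_g_implies_alternating_general
    {𝓦 : Type*} [MeasurableSpace 𝓦] (π : Measure 𝓦)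
    {Ω : Type*} [MeasurableSpace Ω] (P : Measure Ω)
    (W : ℕ → Ω → 𝓦) (hW : ∀ k, Measurable (W k))
    (hstat : ∀ k, Measure.map (W k) P = π)
    (g : 𝓦 → ℝ) (hg : MemLp g 2 π)
    (Qg : 𝓦 → ℝ)
    (hcov : ∀ k : ℕ, ∫ ω, g (W k ω) * g (W (k + 1) ω) ∂P = ∫ w, g w * Qg w ∂π)
    (hQg : ∀ᵐ w ∂π, Qg w = - g w) :
    (∀ n : ℕ, 1 ≤ n → ∀ᵐ ω ∂P, g (W n ω) = - g (W (n - 1) ω)) ∧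
    (∀ n : ℕ, 1 ≤ n → ∀ᵐ ω ∂P,
      ∑ k ∈ Finset.Icc 1 n, g (W k ω)
        = (1 / 2) * (1 + (-1 : ℝ) ^ (n - 1)) * g (W 1 ω)) := by
  have hX : ∀ k, MemLp (fun ω => g (W k ω)) 2 P := fun k =>
    (hstat k ▸ hg).comp_of_map (hW k).aemeasurable
  have hsq : ∀ k, ∫ ω, g (W k ω) ^ 2 ∂P = ∫ w, g w ^ 2 ∂π := fun k => by
    rw [← hstat k, integral_map (hW k).aemeasurable (hstat k ▸ hg.aestronglyMeasurable.pow 2)]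
  have hgQg : ∫ w, g w * Qg w ∂π = -∫ w, g w ^ 2 ∂π := by
    rw [← integral_neg]
    refine integral_congr_ae ?_
    filter_upwards [hQg] with w hw
    rw [hw]; ring
  have hstep : ∀ k, ∀ᵐ ω ∂P, g (W (k + 1) ω) = -g (W k ω) := fun k =>
    ae_eq_neg_of_integral_mul_eq_neg (hX k) (hX (k + 1))
      (by rw [hcov, hgQg, hsq]) (by rw [hsq, hsq])
  refine ⟨fun n hn => ?_, fun n hn => ?_⟩
  · obtain ⟨m, rfl⟩ := Nat.exists_eq_add_of_le' hn
    simpa using hstep m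
  · filter_upwards [ae_all_iff.2 hstep] with ω hω
    exact sum_Icc_one_of_succ_eq_neg hω hn

/-- for a stationary (reversible) Markov chain with transition
operator `Q` and marginal `π`, if `Q g = -g` (in `L²(π)`), then `X_n = -X_{n-1}`
almost surely (where `X_k = g (W k)`), and hence
`S_n = (1/2)(1 + (-1)^{n-1}) X_1` almost surely. -/
theorem Qg_eq_neg_g_implies_alternating
    {𝓦 : Type*} [MeasurableSpace 𝓦] (π : Measure 𝓦) [IsProbabilityMeasure π]
    {Ω : Type*} [MeasurableSpace Ω] (P : Measure Ω) [IsProbabilityMeasure P]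
    (W : ℕ → Ω → 𝓦) (hW : ∀ k, Measurable (W k))
    (hstat : ∀ k, Measure.map (W k) P = π)
    (g : 𝓦 → ℝ) (hgm : Measurable g) (hg : MemLp g 2 π) (hg0 : ∫ w, g w ∂π = 0)
    (Qg : 𝓦 → ℝ)
    (hcov : ∀ k : ℕ, ∫ ω, g (W k ω) * g (W (k + 1) ω) ∂P = ∫ w, g w * Qg w ∂π)
    (hQg : ∀ᵐ w ∂π, Qg w = - g w) :
    (∀ n : ℕ, 1 ≤ n → ∀ᵐ ω ∂P, g (W n ω) = - g (W (n - 1) ω)) ∧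
    (∀ n : ℕ, 1 ≤ n → ∀ᵐ ω ∂P,
      ∑ k ∈ Finset.Icc 1 n, g (W k ω)
        = (1 / 2) * (1 + (-1 : ℝ) ^ (n - 1)) * g (W 1 ω)) :=
  Qg_eq_neg_g_implies_alternating_general π P W hW hstat g hg Qg hcov hQg
end

section
/- For a self-adjoint contraction Q on L²(π) and g ∈ L²₀(π), the identity ‖V_n g‖² = (1/2)σ_{2n-1}² - σ_{n-1}² + (1/2)‖g‖² holds, where V_n = I+Q+...+Q^{n-1} and σ_n² = n‖g‖² + 2∑_{i=1}^{n-1}(n-i)⟨g,Q^i g⟩. -/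
open MeasureTheory Filter Finset
open scoped RealInnerProductSpace

private def Sig (b : ℕ → ℝ) (m : ℕ) : ℝ :=
  m * b 0 + 2 * ∑ i ∈ Finset.Ico 1 m, ((m : ℝ) - i) * b i

private lemma Sig_step (b : ℕ → ℝ) (m : ℕ) :
    Sig b (m + 1) = Sig b m + b 0 + 2 * ∑ i ∈ Finset.Ico 1 (m + 1), b i := by
  rcases m with _ | m
  · simp [Sig]
  unfold Sig
  push_cast
  have h1 : ∑ i ∈ Finset.Ico 1 (m + 1 + 1), (((m:ℝ) + 1 + 1) - i) * b i
      = ∑ i ∈ Finset.Ico 1 (m + 1 + 1), ((((m:ℝ) + 1) - i) * b i + b i) := by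
    apply Finset.sum_congr rfl; intro i _; ring
  rw [h1, Finset.sum_add_distrib,
    Finset.sum_Ico_succ_top (Nat.le_add_left 1 m) (fun i => (((m:ℝ) + 1) - i) * b i)]
  push_cast
  ring

private lemma key_sum (b : ℕ → ℝ) : ∀ n : ℕ, 1 ≤ n →
    ∑ j ∈ Finset.range n, ∑ k ∈ Finset.range n, b (j + k)
      = (1 / 2) * Sig b (2 * n - 1) - Sig b (n - 1) + (1 / 2) * b 0 := by
  intro n hn
  induction n, hn using Nat.le_induction with
  | base =>
      simp [Sig]
      ring
  | succ n hn IH =>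
    have e1 : 2 * (n + 1) - 1 = (2 * n - 1) + 1 + 1 := by omega
    have e2 : (2 * n - 1) + 1 = 2 * n := by omega
    have e3 : (n + 1) - 1 = (n - 1) + 1 := by omega
    have e4 : (n - 1) + 1 = n := by omega
    -- LHS expansion
    have h1 : ∑ j ∈ Finset.range (n+1), ∑ k ∈ Finset.range (n+1), b (j + k)
        = (∑ j ∈ Finset.range n, ∑ k ∈ Finset.range n, b (j + k))
          + 2 * ∑ j ∈ Finset.range n, b (n + j) + b (2 * n) := by
      rw [Finset.sum_range_succ]
      have : ∀ j, ∑ k ∈ Finset.range (n+1), b (j + k)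
          = ∑ k ∈ Finset.range n, b (j + k) + b (j + n) := fun j =>
        Finset.sum_range_succ _ _
      rw [Finset.sum_congr rfl (fun j _ => this j), Finset.sum_add_distrib, this n]
      have hc : ∑ j ∈ Finset.range n, b (j + n) = ∑ j ∈ Finset.range n, b (n + j) := by
        apply Finset.sum_congr rfl; intro j _; rw [Nat.add_comm]
      have h2n : n + n = 2 * n := by ring
      rw [hc, h2n]
      ring
    -- Sigma expansions
    have h2 : Sig b (2 * (n + 1) - 1)
        = Sig b (2 * n - 1) + 2 * b 0 + 2 * ∑ i ∈ Finset.Ico 1 (2 * n), b i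
          + 2 * ∑ i ∈ Finset.Ico 1 (2 * n + 1), b i := by
      rw [e1, Sig_step, Sig_step, e2]
      ring
    have h3 : Sig b ((n + 1) - 1)
        = Sig b (n - 1) + b 0 + 2 * ∑ i ∈ Finset.Ico 1 n, b i := by
      rw [e3, Sig_step, e4]
    -- sum splittings
    have h4 : ∑ i ∈ Finset.Ico 1 (2 * n), b i
        = ∑ i ∈ Finset.Ico 1 n, b i + ∑ i ∈ Finset.Ico n (2 * n), b i :=
      (Finset.sum_Ico_consecutive _ hn (by omega)).symm
    have h5 : ∑ i ∈ Finset.Ico 1 (2 * n + 1), b i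
        = ∑ i ∈ Finset.Ico 1 (2 * n), b i + b (2 * n) :=
      Finset.sum_Ico_succ_top (by omega) _
    have h6 : ∑ i ∈ Finset.Ico n (2 * n), b i = ∑ j ∈ Finset.range n, b (n + j) := by
      have h7 : 2 * n - n = n := by omega
      rw [Finset.sum_Ico_eq_sum_range, h7]
    rw [h1, IH, h2, h3, h5, h4, h6]
    ring

/-- for a self-adjoint contraction `Q` and `g ∈ L₀²(π)` (abstracted
as a vector in a real inner product space), with `V_n = I + Q + ⋯ + Q^{n-1}` and
`σ_n² = n‖g‖² + 2∑_{i=1}^{n-1}(n-i)⟨g, Qⁱ g⟩`, one has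
`‖V_n g‖² = (1/2)σ_{2n-1}² - σ_{n-1}² + (1/2)‖g‖²`. -/
theorem norm_Vn_g_identity
    {E : Type*} [NormedAddCommGroup E] [InnerProductSpace ℝ E]
    (Q : E →L[ℝ] E) (hsa : ∀ x y : E, ⟪Q x, y⟫ = ⟪x, Q y⟫) (hQ : ‖Q‖ ≤ 1)
    (g : E) (σsq : ℕ → ℝ)
    (hσ : ∀ n : ℕ, σsq n
      = n * ‖g‖ ^ 2 + 2 * ∑ i ∈ Finset.Ico 1 n, ((n : ℝ) - i) * ⟪g, (Q ^ i) g⟫)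
    (n : ℕ) (hn : 1 ≤ n) :
    ‖(∑ k ∈ Finset.range n, Q ^ k) g‖ ^ 2
      = (1 / 2) * σsq (2 * n - 1) - σsq (n - 1) + (1 / 2) * ‖g‖ ^ 2 := by
  have hpow : ∀ j : ℕ, ∀ x y : E, ⟪(Q ^ j) x, y⟫ = ⟪x, (Q ^ j) y⟫ := by
    intro j
    induction j with
    | zero => intro x y; simp
    | succ j ih =>
      intro x y
      rw [pow_succ, ContinuousLinearMap.mul_apply, ih, hsa, pow_mul_comm',
        ContinuousLinearMap.mul_apply]
  set b : ℕ → ℝ := fun m => ⟪g, (Q ^ m) g⟫ with hb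
  have hb0 : b 0 = ‖g‖ ^ 2 := by simp [hb, real_inner_self_eq_norm_sq]
  have hσ' : ∀ m : ℕ, σsq m = Sig b m := by
    intro m; rw [hσ m, Sig, hb0]
  have hL : ‖(∑ k ∈ Finset.range n, Q ^ k) g‖ ^ 2
      = ∑ j ∈ Finset.range n, ∑ k ∈ Finset.range n, b (j + k) := by
    rw [← real_inner_self_eq_norm_sq, ContinuousLinearMap.sum_apply, sum_inner]
    apply Finset.sum_congr rfl
    intro j _
    rw [inner_sum]
    apply Finset.sum_congr rfl
    intro k _
    rw [hpow, ← ContinuousLinearMap.mul_apply, ← pow_add]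
  rw [hL, key_sum b n hn, hσ', hσ', hb0]
end

section
/- If σ_n² = n·ℓ(n) where ℓ is slowly varying at infinity, then ‖V_n g‖ = o(σ_n) as n → ∞. -/
/-!
Write `V_n = ∑_{k<n} Qᵏ`. The increments of `σ_n²` are `σ_{k+1}² - σ_k² = 2⟪g, V_{k+1} g⟫ - ‖g‖²`;
summing them over `n ≤ k < 2n` gives `σ_{2n}² = 2σ_n² + 2⟪Q V_n g, V_n g⟫`, and since
`(1 - Q) V_n = 1 - Qⁿ` this becomes
`‖V_n g‖² = σ_{2n}²/2 - σ_n² + ⟪g - Qⁿ g, V_n g⟫ ≤ σ_{2n}²/2 - σ_n² + 2‖g‖‖V_n g‖`.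
Slow variation gives `σ_{2n}² / σ_n² → 2`, so after dividing by `σ_n²` it remains to show
`σ_n² → ∞`. Telescoping gives `σ_n² = ‖V_n g‖² + ∑_{m<n} ⟪(1 - Q²) V_m g, V_m g⟫`, and
Cauchy–Schwarz for the positive operator `1 - Q²`, paired against `g`, turns this into the linear
lower bound `⟪g + Q g, g⟫² n ≤ 10 ‖g‖² σ_n²`, where `⟪g + Q g, g⟫ = σ_2² / 2 > 0`.
-/

open Filter Finset Topology
open scoped RealInnerProductSpace

theorem geom_sum_add {R : Type*} [Semiring R] (x : R) (m n : ℕ) :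
    ∑ k ∈ range (m + n), x ^ k = ∑ k ∈ range m, x ^ k + x ^ m * ∑ k ∈ range n, x ^ k := by
  simp only [sum_range_add, pow_add, mul_sum]

section

variable {E : Type*} [NormedAddCommGroup E] [InnerProductSpace ℝ E]

theorem ContinuousLinearMap.IsPositive.real_inner_apply_sq_le {T : E →L[ℝ] E}
    (hT : T.IsPositive) (x y : E) : ⟪T x, y⟫ ^ 2 ≤ ⟪T x, x⟫ * ⟪T y, y⟫ := by
  have hquad : ∀ t : ℝ, 0 ≤ ⟪T y, y⟫ * (t * t) + 2 * ⟪T x, y⟫ * t + ⟪T x, x⟫ := by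
    intro t
    have h := hT.inner_nonneg_left (x + t • y)
    simp only [map_add, map_smul, inner_add_left, inner_add_right, real_inner_smul_left,
      real_inner_smul_right, hT.inner_left_eq_inner_right y x, real_inner_comm (T x) y] at h
    linarith
  have hdiscrim := discrim_le_zero hquad
  rw [discrim] at hdiscrim
  nlinarith

theorem ContinuousLinearMap.norm_apply_le_of_norm_le_one {Q : E →L[ℝ] E} (hQ1 : ‖Q‖ ≤ 1)
    (x : E) : ‖Q x‖ ≤ ‖x‖ :=
  (Q.le_opNorm x).trans (mul_le_of_le_one_left (norm_nonneg x) hQ1)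

theorem ContinuousLinearMap.norm_pow_apply_le_of_norm_le_one {Q : E →L[ℝ] E} (hQ1 : ‖Q‖ ≤ 1)
    (n : ℕ) (x : E) : ‖(Q ^ n) x‖ ≤ ‖x‖ := by
  induction n with
  | zero => rw [pow_zero, one_apply_eq_self]
  | succ n ih =>
    rw [pow_succ', mul_apply_eq_comp]
    exact (Q.norm_apply_le_of_norm_le_one hQ1 _).trans ih

namespace LinearMap.IsSymmetric

variable {Q : E →L[ℝ] E} (hQ : (Q : E →ₗ[ℝ] E).IsSymmetric)
include hQ

theorem inner_pow_apply (n : ℕ) (x y : E) : ⟪(Q ^ n) x, y⟫ = ⟪x, (Q ^ n) y⟫ := by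
  have h := hQ.pow n x y
  rwa [← ContinuousLinearMap.toLinearMap_pow] at h

theorem inner_pow_apply_geomSum_apply (g : E) (j n : ℕ) :
    ⟪(Q ^ j) g, (∑ k ∈ Finset.range n, Q ^ k) g⟫
      = ⟪g, (∑ k ∈ Finset.range (j + n), Q ^ k) g⟫ - ⟪g, (∑ k ∈ Finset.range j, Q ^ k) g⟫ := by
  rw [hQ.inner_pow_apply, geom_sum_add, _root_.add_apply, inner_add_right, mul_apply_eq_comp]
  ring

theorem inner_one_sub_sq_apply (x y : E) :
    ⟪(1 - Q ^ 2 : E →L[ℝ] E) x, y⟫ = ⟪x, y⟫ - ⟪Q x, Q y⟫ := by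
  rw [_root_.sub_apply, inner_sub_left, pow_two, mul_apply_eq_comp, one_apply_eq_self]
  exact congrArg _ (hQ (Q x) y)

theorem isSymmetric_one_sub_sq : ((1 - Q ^ 2 : E →L[ℝ] E) : E →ₗ[ℝ] E).IsSymmetric := by
  intro x y
  change ⟪(1 - Q ^ 2 : E →L[ℝ] E) x, y⟫ = ⟪x, (1 - Q ^ 2 : E →L[ℝ] E) y⟫
  rw [hQ.inner_one_sub_sq_apply, real_inner_comm ((1 - Q ^ 2 : E →L[ℝ] E) y),
    hQ.inner_one_sub_sq_apply, real_inner_comm y, real_inner_comm (Q y)]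

theorem isPositive_one_sub_sq (hQ1 : ‖Q‖ ≤ 1) : (1 - Q ^ 2 : E →L[ℝ] E).IsPositive := by
  refine (ContinuousLinearMap.isPositive_iff _).2 ⟨hQ.isSymmetric_one_sub_sq, fun x => ?_⟩
  rw [hQ.inner_one_sub_sq_apply, real_inner_self_eq_norm_sq, real_inner_self_eq_norm_sq,
    sub_nonneg]
  gcongr
  exact Q.norm_apply_le_of_norm_le_one hQ1 x

theorem inner_one_sub_sq_apply_geomSum_apply (g : E) (m : ℕ) :
    ⟪(1 - Q ^ 2 : E →L[ℝ] E) g, (∑ k ∈ Finset.range m, Q ^ k) g⟫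
      = ⟪g + Q g, g⟫ - ⟪g + Q g, (Q ^ m) g⟫ := by
  have hop : (1 - Q ^ 2 : E →L[ℝ] E) * ∑ k ∈ Finset.range m, Q ^ k = (1 + Q) * (1 - Q ^ m) := by
    rw [← mul_neg_geom_sum Q m, ← mul_assoc]
    congr 1
    noncomm_ring
  have hT : ⟪(1 - Q ^ 2 : E →L[ℝ] E) g, (∑ k ∈ Finset.range m, Q ^ k) g⟫
      = ⟪g, (1 - Q ^ 2 : E →L[ℝ] E) ((∑ k ∈ Finset.range m, Q ^ k) g)⟫ :=
    hQ.isSymmetric_one_sub_sq _ _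
  rw [hT, ← mul_apply_eq_comp, hop, mul_apply_eq_comp, _root_.add_apply, one_apply_eq_self,
    _root_.sub_apply, one_apply_eq_self, inner_add_right,
    show ⟪g, Q (g - (Q ^ m) g)⟫ = ⟪Q g, g - (Q ^ m) g⟫ from (hQ _ _).symm, ← inner_add_left,
    inner_sub_right]

theorem sum_inner_one_sub_sq_apply_geomSum_apply (g : E) (n : ℕ) :
    ∑ m ∈ Finset.range n, ⟪(1 - Q ^ 2 : E →L[ℝ] E) g, (∑ k ∈ Finset.range m, Q ^ k) g⟫
      = n * ⟪g + Q g, g⟫ - ⟪g + Q g, (∑ k ∈ Finset.range n, Q ^ k) g⟫ := by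
  rw [sum_congr rfl fun m _ => hQ.inner_one_sub_sq_apply_geomSum_apply g m, sum_sub_distrib,
    sum_const, card_range, nsmul_eq_mul, ← inner_sum, ← _root_.sum_apply]

end LinearMap.IsSymmetric

noncomputable def sigmaSq (Q : E →L[ℝ] E) (g : E) (n : ℕ) : ℝ :=
  n * ‖g‖ ^ 2 + 2 * ∑ i ∈ Ico 1 n, ((n : ℝ) - i) * ⟪g, (Q ^ i) g⟫

variable (Q : E →L[ℝ] E) (g : E)

theorem sigmaSq_eq_sum_range (n : ℕ) :
    sigmaSq Q g n = 2 * ∑ i ∈ range n, ((n : ℝ) - i) * ⟪g, (Q ^ i) g⟫ - n * ‖g‖ ^ 2 := by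
  rcases Nat.eq_zero_or_pos n with rfl | hn
  · simp [sigmaSq]
  · rw [sigmaSq, range_eq_Ico, sum_eq_sum_Ico_succ_bot hn]
    simp only [Nat.cast_zero, sub_zero, pow_zero, one_apply_eq_self, real_inner_self_eq_norm_sq]
    ring

theorem sigmaSq_succ (n : ℕ) :
    sigmaSq Q g (n + 1) = sigmaSq Q g n + 2 * ⟪g, (∑ k ∈ range (n + 1), Q ^ k) g⟫ - ‖g‖ ^ 2 := by
  rw [_root_.sum_apply, inner_sum]
  simp only [sigmaSq_eq_sum_range, sum_range_succ _ n, Nat.cast_succ,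
    add_sub_right_comm _ (1 : ℝ), add_mul, one_mul, sum_add_distrib, sub_self, zero_mul]
  ring

theorem sigmaSq_eq_sum_range_inner_geomSum (n : ℕ) :
    sigmaSq Q g n = ∑ k ∈ range n, (2 * ⟪g, (∑ i ∈ range (k + 1), Q ^ i) g⟫ - ‖g‖ ^ 2) := by
  induction n with
  | zero => simp [sigmaSq]
  | succ n ih =>
    rw [sigmaSq_succ, ih,
      sum_range_succ (fun k => 2 * ⟪g, (∑ i ∈ range (k + 1), Q ^ i) g⟫ - ‖g‖ ^ 2), add_sub_assoc]

theorem sigmaSq_two : sigmaSq Q g 2 = 2 * ⟪g + Q g, g⟫ := by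
  simp only [sigmaSq, Nat.cast_ofNat, Nat.Ico_succ_singleton, sum_singleton, Nat.cast_one, pow_one,
    inner_add_left, real_inner_self_eq_norm_sq, real_inner_comm g (Q g)]
  ring

theorem sigmaSq_two_mul (hQ : (Q : E →ₗ[ℝ] E).IsSymmetric) (n : ℕ) :
    sigmaSq Q g (2 * n) = 2 * sigmaSq Q g n
      + 2 * ⟪Q ((∑ k ∈ range n, Q ^ k) g), (∑ k ∈ range n, Q ^ k) g⟫ := by
  have hQV : Q ((∑ k ∈ range n, Q ^ k) g) = ∑ k ∈ range n, (Q ^ (k + 1)) g := by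
    rw [← mul_apply_eq_comp, mul_sum, _root_.sum_apply]
    simp only [pow_succ']
  have hshift : ∀ k, ⟪(Q ^ (k + 1)) g, (∑ i ∈ range n, Q ^ i) g⟫
      = ⟪g, (∑ i ∈ range (n + k + 1), Q ^ i) g⟫ - ⟪g, (∑ i ∈ range (k + 1), Q ^ i) g⟫ := by
    intro k
    rw [hQ.inner_pow_apply_geomSum_apply, show k + 1 + n = n + k + 1 by omega]
  rw [two_mul, sigmaSq_eq_sum_range_inner_geomSum Q g (n + n), sum_range_add,
    ← sigmaSq_eq_sum_range_inner_geomSum, hQV, sum_inner, mul_sum, two_mul, add_assoc,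
    add_right_inj, sigmaSq_eq_sum_range_inner_geomSum, ← sum_add_distrib]
  refine sum_congr rfl fun k _ => ?_
  rw [hshift]
  ring

theorem norm_sq_geomSum_apply_eq (hQ : (Q : E →ₗ[ℝ] E).IsSymmetric) (n : ℕ) :
    ‖(∑ k ∈ range n, Q ^ k) g‖ ^ 2
      = sigmaSq Q g (2 * n) / 2 - sigmaSq Q g n + ⟪g - (Q ^ n) g, (∑ k ∈ range n, Q ^ k) g⟫ := by
  have hV : (1 - Q) ((∑ k ∈ range n, Q ^ k) g) = g - (Q ^ n) g := by
    rw [← mul_apply_eq_comp, mul_neg_geom_sum, sub_apply, one_apply_eq_self]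
  rw [sigmaSq_two_mul Q g hQ, ← hV, sub_apply, one_apply_eq_self, inner_sub_left,
    ← real_inner_self_eq_norm_sq]
  ring

theorem sum_norm_sq_sub_norm_sq_add_norm_sq (n : ℕ) :
    ∑ m ∈ range n, (‖(∑ k ∈ range m, Q ^ k) g‖ ^ 2 - ‖Q ((∑ k ∈ range m, Q ^ k) g)‖ ^ 2)
      + ‖(∑ k ∈ range n, Q ^ k) g‖ ^ 2 = sigmaSq Q g n := by
  induction n with
  | zero => simp [sigmaSq]
  | succ n ih =>
    have hQV : Q ((∑ k ∈ range n, Q ^ k) g) = (∑ k ∈ range (n + 1), Q ^ k) g - g := by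
      rw [geom_sum_succ, add_apply, mul_apply_eq_comp, one_apply_eq_self, add_sub_cancel_right]
    rw [sum_range_succ, sigmaSq_succ, ← ih, hQV, norm_sub_sq_real, real_inner_comm]
    ring

theorem norm_sq_geomSum_apply_le_sigmaSq (hQ1 : ‖Q‖ ≤ 1) (n : ℕ) :
    ‖(∑ k ∈ range n, Q ^ k) g‖ ^ 2 ≤ sigmaSq Q g n := by
  rw [← sum_norm_sq_sub_norm_sq_add_norm_sq]
  refine le_add_of_nonneg_left (sum_nonneg fun m _ => sub_nonneg.2 ?_)
  gcongr
  exact Q.norm_apply_le_of_norm_le_one hQ1 _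

theorem inner_add_apply_nonneg (hQ1 : ‖Q‖ ≤ 1) : 0 ≤ ⟪g + Q g, g⟫ := by
  rw [inner_add_left, real_inner_self_eq_norm_sq]
  have h1 := neg_le_of_abs_le (abs_real_inner_le_norm (Q g) g)
  have h2 := Q.norm_apply_le_of_norm_le_one hQ1 g
  nlinarith [norm_nonneg g]

theorem sq_sum_inner_one_sub_sq_apply_geomSum_apply_le (hQ : (Q : E →ₗ[ℝ] E).IsSymmetric)
    (hQ1 : ‖Q‖ ≤ 1) (n : ℕ) :
    (∑ m ∈ range n, ⟪(1 - Q ^ 2 : E →L[ℝ] E) g, (∑ k ∈ range m, Q ^ k) g⟫) ^ 2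
      ≤ n * (‖g‖ ^ 2 * sigmaSq Q g n) := by
  set T : E →L[ℝ] E := 1 - Q ^ 2
  set V : ℕ → E := fun m => (∑ k ∈ range m, Q ^ k) g
  have hT : T.IsPositive := hQ.isPositive_one_sub_sq hQ1
  have hTg : ⟪T g, g⟫ ≤ ‖g‖ ^ 2 := by
    rw [hQ.inner_one_sub_sq_apply, real_inner_self_eq_norm_sq, sub_le_self_iff]
    exact real_inner_self_nonneg
  have hTV : ∑ m ∈ range n, ⟪T (V m), V m⟫ ≤ sigmaSq Q g n := by
    rw [← sum_norm_sq_sub_norm_sq_add_norm_sq]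
    refine le_add_of_le_of_nonneg (le_of_eq (sum_congr rfl fun m _ => ?_)) (sq_nonneg _)
    rw [hQ.inner_one_sub_sq_apply, real_inner_self_eq_norm_sq, real_inner_self_eq_norm_sq]
  calc (∑ m ∈ range n, ⟪T g, V m⟫) ^ 2
      ≤ n * ∑ m ∈ range n, ⟪T g, V m⟫ ^ 2 := by
        simpa only [card_range] using
          sq_sum_le_card_mul_sum_sq (s := range n) (f := fun m => ⟪T g, V m⟫)
    _ ≤ n * ∑ m ∈ range n, ‖g‖ ^ 2 * ⟪T (V m), V m⟫ := by
        gcongr with m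
        exact (hT.real_inner_apply_sq_le g (V m)).trans
          (mul_le_mul_of_nonneg_right hTg (hT.inner_nonneg_left _))
    _ ≤ n * (‖g‖ ^ 2 * sigmaSq Q g n) := by rw [← mul_sum]; gcongr

theorem inner_add_sq_mul_le_sigmaSq (hQ : (Q : E →ₗ[ℝ] E).IsSymmetric) (hQ1 : ‖Q‖ ≤ 1)
    (n : ℕ) : ⟪g + Q g, g⟫ ^ 2 * n ≤ 10 * ‖g‖ ^ 2 * sigmaSq Q g n := by
  rcases Nat.eq_zero_or_pos n with rfl | hn
  · simp [sigmaSq]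
  set v := ‖(∑ k ∈ range n, Q ^ k) g‖
  set S := ∑ m ∈ range n, ⟪(1 - Q ^ 2 : E →L[ℝ] E) g, (∑ k ∈ range m, Q ^ k) g⟫
  have hS : S ^ 2 ≤ n * (‖g‖ ^ 2 * sigmaSq Q g n) :=
    sq_sum_inner_one_sub_sq_apply_geomSum_apply_le Q g hQ hQ1 n
  have hP : n * ⟪g + Q g, g⟫ - S ≤ 2 * ‖g‖ * v := by
    rw [show S = _ from hQ.sum_inner_one_sub_sq_apply_geomSum_apply g n, sub_sub_cancel]
    refine (real_inner_le_norm _ _).trans (mul_le_mul_of_nonneg_right ?_ (norm_nonneg _))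
    linarith [norm_add_le g (Q g), Q.norm_apply_le_of_norm_le_one hQ1 g]
  have hv : v ^ 2 ≤ sigmaSq Q g n := norm_sq_geomSum_apply_le_sigmaSq Q g hQ1 n
  have hB : (2 * ‖g‖ * v) ^ 2 ≤ 4 * (‖g‖ ^ 2 * sigmaSq Q g n) := by
    rw [mul_pow, mul_pow, mul_assoc]
    gcongr
    norm_num
  have hA : (n * ⟪g + Q g, g⟫) ^ 2 ≤ (S + 2 * ‖g‖ * v) ^ 2 :=
    pow_le_pow_left₀ (mul_nonneg n.cast_nonneg (inner_add_apply_nonneg Q g hQ1)) (by linarith) 2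
  have hσ : 0 ≤ ‖g‖ ^ 2 * sigmaSq Q g n := mul_nonneg (sq_nonneg _) ((sq_nonneg _).trans hv)
  have hn1 : (1 : ℝ) ≤ n := by exact_mod_cast hn
  -- `(n⟪g + Q g, g⟫)² ≤ 2S² + 2(2‖g‖‖V_n g‖)² ≤ (2n + 8)‖g‖²σ_n² ≤ 10n‖g‖²σ_n²`
  have key : n * (⟪g + Q g, g⟫ ^ 2 * n) ≤ n * (10 * ‖g‖ ^ 2 * sigmaSq Q g n) := by
    nlinarith [sq_nonneg (S - 2 * ‖g‖ * v), mul_le_mul_of_nonneg_right hn1 hσ]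
  exact le_of_mul_le_mul_left key (by positivity)

theorem tendsto_sigmaSq_atTop (hQ : (Q : E →ₗ[ℝ] E).IsSymmetric) (hQ1 : ‖Q‖ ≤ 1)
    (h2 : 0 < sigmaSq Q g 2) : Tendsto (sigmaSq Q g) atTop atTop := by
  have hL : 0 < ⟪g + Q g, g⟫ := by linarith [sigmaSq_two Q g]
  have hg : 0 < ‖g‖ := norm_pos_iff.2 fun h => by simp [h] at hL
  have hc : 0 < ⟪g + Q g, g⟫ ^ 2 / (10 * ‖g‖ ^ 2) := by positivity
  refine tendsto_atTop_mono (fun n => ?_) (tendsto_natCast_atTop_atTop.const_mul_atTop hc)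
  rw [div_mul_eq_mul_div, div_le_iff₀ (by positivity), mul_comm (sigmaSq Q g n)]
  exact inner_add_sq_mul_le_sigmaSq Q g hQ hQ1 n

theorem sq_norm_geomSum_apply_div_sqrt_sigmaSq_le (hQ : (Q : E →ₗ[ℝ] E).IsSymmetric)
    (hQ1 : ‖Q‖ ≤ 1) {n : ℕ} (hn : 0 < sigmaSq Q g n) :
    (‖(∑ k ∈ range n, Q ^ k) g‖ / √(sigmaSq Q g n)) ^ 2
      ≤ sigmaSq Q g (2 * n) / sigmaSq Q g n / 2 - 1 + 2 * ‖g‖ / √(sigmaSq Q g n) := by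
  set v := ‖(∑ k ∈ range n, Q ^ k) g‖
  set s := √(sigmaSq Q g n)
  have hs : 0 < s := Real.sqrt_pos.2 hn
  have hss : s ^ 2 = sigmaSq Q g n := Real.sq_sqrt hn.le
  have hvs : v ≤ s := Real.le_sqrt_of_sq_le (norm_sq_geomSum_apply_le_sigmaSq Q g hQ1 n)
  have hv : v ^ 2 ≤ sigmaSq Q g (2 * n) / 2 - sigmaSq Q g n + 2 * ‖g‖ * v := by
    rw [norm_sq_geomSum_apply_eq Q g hQ, add_le_add_iff_left]
    refine (real_inner_le_norm _ _).trans (mul_le_mul_of_nonneg_right ?_ (norm_nonneg _))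
    linarith [norm_sub_le g ((Q ^ n) g), Q.norm_pow_apply_le_of_norm_le_one hQ1 n g]
  have hrhs : (sigmaSq Q g (2 * n) / sigmaSq Q g n / 2 - 1 + 2 * ‖g‖ / s) * sigmaSq Q g n
      = sigmaSq Q g (2 * n) / 2 - sigmaSq Q g n + 2 * ‖g‖ * s := by
    rw [← hss]
    field_simp
  rw [div_pow, div_le_iff₀ (by positivity), hss, hrhs]
  nlinarith [mul_le_mul_of_nonneg_left hvs (norm_nonneg g)]

theorem tendsto_norm_geomSum_apply_div_sqrt_sigmaSq (hQ : (Q : E →ₗ[ℝ] E).IsSymmetric)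
    (hQ1 : ‖Q‖ ≤ 1) (h2 : 0 < sigmaSq Q g 2)
    (hratio : Tendsto (fun n : ℕ => sigmaSq Q g (2 * n) / sigmaSq Q g n) atTop (𝓝 2)) :
    Tendsto (fun n : ℕ => ‖(∑ k ∈ range n, Q ^ k) g‖ / √(sigmaSq Q g n)) atTop (𝓝 0) := by
  have htop := tendsto_sigmaSq_atTop Q g hQ hQ1 h2
  have hbound : Tendsto (fun n : ℕ => sigmaSq Q g (2 * n) / sigmaSq Q g n / 2 - 1
      + 2 * ‖g‖ / √(sigmaSq Q g n)) atTop (𝓝 0) := by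
    have h := ((hratio.div_const 2).sub_const 1).add
      ((tendsto_const_nhds (x := 2 * ‖g‖)).div_atTop (Real.tendsto_sqrt_atTop.comp htop))
    simpa using h
  refine squeeze_zero' (Eventually.of_forall fun n => by positivity) ?_
    (by simpa using hbound.sqrt)
  filter_upwards [htop.eventually_gt_atTop 0] with n hn
  exact Real.le_sqrt_of_sq_le (sq_norm_geomSum_apply_div_sqrt_sigmaSq_le Q g hQ hQ1 hn)

end

/-- if `σ_n² = n ℓ(n)` with `ℓ` slowly varying at infinity, then
`‖V_n g‖ = o(σ_n)`, where `V_n = I + Q + ⋯ + Q^{n-1}` for a self-adjoint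
contraction `Q` and `σ_n² = n‖g‖² + 2∑_{i=1}^{n-1}(n-i)⟨g, Qⁱ g⟩`. -/
theorem norm_Vn_g_little_o_of_sigma
    {E : Type*} [NormedAddCommGroup E] [InnerProductSpace ℝ E]
    (Q : E →L[ℝ] E) (hsa : ∀ x y : E, ⟪Q x, y⟫ = ⟪x, Q y⟫) (hQ : ‖Q‖ ≤ 1)
    (g : E) (σsq : ℕ → ℝ)
    (hσ : ∀ n : ℕ, σsq n
      = n * ‖g‖ ^ 2 + 2 * ∑ i ∈ Finset.Ico 1 n, ((n : ℝ) - i) * ⟪g, (Q ^ i) g⟫)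
    (ℓ : ℝ → ℝ) (hℓpos : ∀ x : ℝ, 0 < x → 0 < ℓ x)
    (hslow : ∀ t : ℝ, 0 < t → Tendsto (fun x : ℝ => ℓ (t * x) / ℓ x) atTop (𝓝 1))
    (hvar : ∀ n : ℕ, σsq n = n * ℓ n) :
    Tendsto (fun n : ℕ => ‖(∑ k ∈ Finset.range n, Q ^ k) g‖ / Real.sqrt (σsq n))
      atTop (𝓝 0) := by
  obtain rfl : σsq = sigmaSq Q g := funext hσ
  have h2 : 0 < sigmaSq Q g 2 := by
    rw [hvar]
    exact mul_pos (by norm_num) (hℓpos _ (by norm_num))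
  have hratio : Tendsto (fun n : ℕ => sigmaSq Q g (2 * n) / sigmaSq Q g n) atTop (𝓝 2) := by
    have hℓ := ((hslow 2 two_pos).comp tendsto_natCast_atTop_atTop).const_mul 2
    rw [mul_one] at hℓ
    refine hℓ.congr' ?_
    filter_upwards [eventually_gt_atTop 0] with n hn
    have hℓn := (hℓpos n (Nat.cast_pos.2 hn)).ne'
    simp only [Function.comp_apply, hvar, Nat.cast_mul, Nat.cast_ofNat]
    field_simp
  exact tendsto_norm_geomSum_apply_div_sqrt_sigmaSq Q g hsa hQ h2 hratio
end

section
/- If random variables Z_n satisfy that the conditional distribution of Z_n given W_0 converges in probability to a distribution function G, and Z_n' - Z_n → 0 in probability, then the conditional distribution of Z_n' given W_0 also converges in probability to G (a conditional Slutsky theorem). -/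
/-!
For continuity points `s < t < u` of `G`, `{Z' n ≤ t} ⊆ {Z n ≤ u} ∪ {u - t ≤ |Z' n - Z n|}`
and `{Z n ≤ s} ⊆ {Z' n ≤ t} ∪ {t - s ≤ |Z' n - Z n|}`. Conditioning on `W₀` sandwiches
`P[Z' n ≤ t | W₀]` between `P[Z n ≤ s | W₀]` and `P[Z n ≤ u | W₀]` up to the conditional
probabilities of the exceptional events, which tend to `0` in `L¹` (their expectations are the
unconditional probabilities), hence in probability. As the discontinuities of the monotone `G`
are countable, `s` and `u` can be taken with `G s` and `G u` arbitrarily close to `G t`.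
-/

open MeasureTheory Filter Topology

theorem setOf_le_subset_union_le_abs_sub {Ω : Type*} (X Y : Ω → ℝ) (t u : ℝ) :
    {ω | X ω ≤ t} ⊆ {ω | Y ω ≤ u} ∪ {ω | u - t ≤ |X ω - Y ω|} := by
  intro ω (hX : X ω ≤ t)
  by_cases hY : Y ω ≤ u
  · exact Or.inl hY
  · exact Or.inr (show u - t ≤ |X ω - Y ω| by linarith [neg_abs_le (X ω - Y ω)])

namespace MeasureTheory

variable {α ι E : Type*} {m m0 : MeasurableSpace α} {μ : Measure α} {l : Filter ι}

theorem TendstoInMeasure.add [SeminormedAddCommGroup E] {f g : ι → α → E} {F G : α → E}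
    (hf : TendstoInMeasure μ f l F) (hg : TendstoInMeasure μ g l G) :
    TendstoInMeasure μ (fun i => f i + g i) l (fun x => F x + G x) := by
  rw [tendstoInMeasure_iff_norm] at *
  intro ε hε
  have hsum := (hf (ε / 2) (half_pos hε)).add (hg (ε / 2) (half_pos hε))
  rw [add_zero] at hsum
  refine tendsto_of_tendsto_of_tendsto_of_le_of_le tendsto_const_nhds hsum (fun _ => zero_le)
    fun i => (measure_mono fun x hx => ?_).trans (measure_union_le _ _)
  by_contra! hlt
  simp only [Set.mem_union, Set.mem_ofPred_eq, not_or, not_le] at hlt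
  have : ‖(f i x + g i x) - (F x + G x)‖ < ε := by
    rw [add_sub_add_comm]
    linarith [norm_add_le (f i x - F x) (g i x - G x)]
  exact this.not_ge hx

theorem TendstoInMeasure.neg [SeminormedAddCommGroup E] {f : ι → α → E} {F : α → E}
    (hf : TendstoInMeasure μ f l F) : TendstoInMeasure μ (fun i => -f i) l (fun x => -F x) := by
  simpa only [tendstoInMeasure_iff_norm, Pi.neg_apply, neg_sub_neg, norm_sub_rev] using hf

theorem TendstoInMeasure.sub [SeminormedAddCommGroup E] {f g : ι → α → E} {F G : α → E}
    (hf : TendstoInMeasure μ f l F) (hg : TendstoInMeasure μ g l G) :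
    TendstoInMeasure μ (fun i => f i - g i) l (fun x => F x - G x) := by
  simpa only [sub_eq_add_neg] using hf.add hg.neg

theorem TendstoInMeasure.tendsto_measure_le_of_ae_le {f g : ι → α → ℝ} {a a' : ℝ}
    (hf : TendstoInMeasure μ f l fun _ => a) (hfg : ∀ i, f i ≤ᵐ[μ] g i) (ha : a' < a) :
    Tendsto (fun i => μ {x | g i x ≤ a'}) l (𝓝 0) := by
  refine tendsto_of_tendsto_of_tendsto_of_le_of_le tendsto_const_nhds
    (tendstoInMeasure_iff_dist.1 hf (a - a') (sub_pos.2 ha)) (fun _ => zero_le)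
    fun i => measure_mono_ae ((hfg i).mono fun x hfgx (hx : g i x ≤ a') => ?_)
  change a - a' ≤ |f i x - a|
  linarith [neg_abs_le (f i x - a)]

theorem TendstoInMeasure.tendsto_measure_ge_of_ae_le {f g : ι → α → ℝ} {b b' : ℝ}
    (hf : TendstoInMeasure μ f l fun _ => b) (hgf : ∀ i, g i ≤ᵐ[μ] f i) (hb : b < b') :
    Tendsto (fun i => μ {x | b' ≤ g i x}) l (𝓝 0) := by
  refine tendsto_of_tendsto_of_tendsto_of_le_of_le tendsto_const_nhds
    (tendstoInMeasure_iff_dist.1 hf (b' - b) (sub_pos.2 hb)) (fun _ => zero_le)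
    fun i => measure_mono_ae ((hgf i).mono fun x hgfx (hx : b' ≤ g i x) => ?_)
  change b' - b ≤ |f i x - b|
  linarith [le_abs_self (f i x - b)]

theorem tendstoInMeasure_const_of_tendsto_measure_le_of_tendsto_measure_ge {g : ι → α → ℝ}
    {c : ℝ} (hlow : ∀ a < c, Tendsto (fun i => μ {x | g i x ≤ a}) l (𝓝 0))
    (hup : ∀ b > c, Tendsto (fun i => μ {x | b ≤ g i x}) l (𝓝 0)) :
    TendstoInMeasure μ g l fun _ => c := by
  rw [tendstoInMeasure_iff_dist]
  intro ε hε
  have hsum := (hlow (c - ε) (sub_lt_self c hε)).add (hup (c + ε) (lt_add_of_pos_right c hε))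
  rw [add_zero] at hsum
  refine tendsto_of_tendsto_of_tendsto_of_le_of_le tendsto_const_nhds hsum (fun _ => zero_le)
    fun i => (measure_mono fun x hx => ?_).trans (measure_union_le _ _)
  simp only [Set.mem_ofPred_eq, Real.dist_eq, Set.mem_union] at hx ⊢
  rcases le_abs'.1 hx with h | h
  · exact Or.inl (by linarith)
  · exact Or.inr (by linarith)

theorem tendstoInMeasure_condExp_of_tendsto_eLpNorm {f : ι → α → E} [NormedAddCommGroup E]
    [NormedSpace ℝ E] [CompleteSpace E] (hf : Tendsto (fun i => eLpNorm (f i) 1 μ) l (𝓝 0)) :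
    TendstoInMeasure μ (fun i => μ[f i | m]) l fun _ => 0 := by
  refine tendstoInMeasure_of_tendsto_eLpNorm one_ne_zero
    (fun _ => integrable_condExp.aestronglyMeasurable) aestronglyMeasurable_const ?_
  simp only [← Pi.zero_def, sub_zero]
  exact tendsto_of_tendsto_of_tendsto_of_le_of_le tendsto_const_nhds hf (fun _ => zero_le)
    fun i => eLpNorm_condExp_le_eLpNorm (f i) le_rfl

theorem condExp_indicator_one_le_add_of_subset [IsFiniteMeasure μ] {A B C : Set α}
    (hA : MeasurableSet A) (hB : MeasurableSet B) (hC : MeasurableSet C) (hABC : A ⊆ B ∪ C) :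
    μ[A.indicator (fun _ => (1 : ℝ)) | m] ≤ᵐ[μ]
      μ[B.indicator (fun _ => (1 : ℝ)) | m] + μ[C.indicator (fun _ => (1 : ℝ)) | m] := by
  have hint : ∀ {S : Set α}, MeasurableSet S → Integrable (S.indicator fun _ => (1 : ℝ)) μ :=
    fun hS => (integrable_const 1).indicator hS
  have hle : A.indicator (fun _ => (1 : ℝ)) ≤
      B.indicator (fun _ => (1 : ℝ)) + C.indicator (fun _ => (1 : ℝ)) := by
    rw [← Set.indicator_union_add_inter]
    exact (Set.indicator_le_indicator_of_subset hABC fun _ => zero_le_one).trans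
      (le_add_of_nonneg_right (Set.indicator_nonneg (fun _ _ => zero_le_one)))
  exact (condExp_mono (hint hA) ((hint hB).add (hint hC)) (ae_of_all _ hle)).trans
    (condExp_add (hint hB) (hint hC) m).le

theorem tendstoInMeasure_condExp_indicator_le_abs_sub {X Y : ι → α → ℝ}
    (hX : ∀ i, Measurable (X i)) (hY : ∀ i, Measurable (Y i))
    (hXY : TendstoInMeasure μ (fun i ω => X i ω - Y i ω) l fun _ => 0) {c : ℝ} (hc : 0 < c) :
    TendstoInMeasure μ
      (fun i => μ[{ω | c ≤ |X i ω - Y i ω|}.indicator (fun _ => (1 : ℝ)) | m]) l fun _ => 0 := by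
  refine tendstoInMeasure_condExp_of_tendsto_eLpNorm ?_
  have hmeas : ∀ i, MeasurableSet {ω | c ≤ |X i ω - Y i ω|} :=
    fun i => measurableSet_le measurable_const ((hX i).sub (hY i)).abs
  simp only [eLpNorm_indicator_const (hmeas _) one_ne_zero ENNReal.one_ne_top, enorm_one,
    one_mul, ENNReal.toReal_one, div_one, ENNReal.rpow_one]
  simpa only [Real.dist_eq, sub_zero] using tendstoInMeasure_iff_dist.1 hXY c hc

theorem condExp_indicator_setOf_le_le_add [IsFiniteMeasure μ] {X Y : α → ℝ} (hX : Measurable X)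
    (hY : Measurable Y) (t u : ℝ) :
    μ[{ω | X ω ≤ t}.indicator (fun _ => (1 : ℝ)) | m] ≤ᵐ[μ]
      μ[{ω | Y ω ≤ u}.indicator (fun _ => (1 : ℝ)) | m] +
        μ[{ω | u - t ≤ |X ω - Y ω|}.indicator (fun _ => (1 : ℝ)) | m] :=
  condExp_indicator_one_le_add_of_subset (measurableSet_le hX measurable_const)
    (measurableSet_le hY measurable_const) (measurableSet_le measurable_const (hX.sub hY).abs)
    (setOf_le_subset_union_le_abs_sub X Y t u)

end MeasureTheory

theorem Monotone.exists_lt_continuousAt_lt {G : ℝ → ℝ} (hG : Monotone G) {t a : ℝ}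
    (ht : ContinuousAt G t) (ha : a < G t) : ∃ s < t, ContinuousAt G s ∧ a < G s := by
  obtain ⟨l, r, ⟨hlt, htr⟩, hsub⟩ :=
    mem_nhds_iff_exists_Ioo_subset.1 (ht.eventually (lt_mem_nhds ha))
  obtain ⟨s, hs, hls, hst⟩ := (hG.countable_not_continuousAt.dense_compl ℝ).exists_between hlt
  exact ⟨s, hst, not_not.1 hs, hsub ⟨hls, hst.trans htr⟩⟩

theorem Monotone.exists_gt_continuousAt_gt {G : ℝ → ℝ} (hG : Monotone G) {t b : ℝ}
    (ht : ContinuousAt G t) (hb : G t < b) : ∃ u > t, ContinuousAt G u ∧ G u < b := by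
  obtain ⟨l, r, ⟨hlt, htr⟩, hsub⟩ :=
    mem_nhds_iff_exists_Ioo_subset.1 (ht.eventually (gt_mem_nhds hb))
  obtain ⟨u, hu, htu, hur⟩ := (hG.countable_not_continuousAt.dense_compl ℝ).exists_between htr
  exact ⟨u, htu, not_not.1 hu, hsub ⟨hlt.trans htu, hur⟩⟩

theorem conditional_slutsky_general
    {Ω 𝓦 : Type*} [MeasurableSpace Ω] [MeasurableSpace 𝓦]
    (P : Measure Ω) [IsProbabilityMeasure P]
    (W0 : Ω → 𝓦)
    (Z Z' : ℕ → Ω → ℝ) (hZ : ∀ n, Measurable (Z n)) (hZ' : ∀ n, Measurable (Z' n))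
    (G : ℝ → ℝ) (hG : Monotone G)
    (hconv : ∀ t : ℝ, ContinuousAt G t →
      TendstoInMeasure P
        (fun n => P[Set.indicator {ω | Z n ω ≤ t} (fun _ => (1 : ℝ)) |
          MeasurableSpace.comap W0 inferInstance])
        atTop (fun _ => G t))
    (hdiff : TendstoInMeasure P (fun n ω => Z' n ω - Z n ω) atTop (fun _ => (0 : ℝ))) :
    ∀ t : ℝ, ContinuousAt G t →
      TendstoInMeasure P
        (fun n => P[Set.indicator {ω | Z' n ω ≤ t} (fun _ => (1 : ℝ)) |
          MeasurableSpace.comap W0 inferInstance])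
        atTop (fun _ => G t) := by
  intro t ht
  have hsmall : ∀ c > 0, TendstoInMeasure P (fun n => P[{ω | c ≤ |Z' n ω - Z n ω|}.indicator
      (fun _ => (1 : ℝ)) | MeasurableSpace.comap W0 inferInstance]) atTop fun _ => 0 :=
    fun c hc => tendstoInMeasure_condExp_indicator_le_abs_sub hZ' hZ hdiff hc
  refine tendstoInMeasure_const_of_tendsto_measure_le_of_tendsto_measure_ge
    (fun a ha => ?_) (fun b hb => ?_)
  · obtain ⟨s, hst, hs, has⟩ := hG.exists_lt_continuousAt_lt ht ha
    refine ((hconv s hs).sub (hsmall (t - s) (sub_pos.2 hst))).tendsto_measure_le_of_ae_le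
      (fun n => ?_) (by rwa [sub_zero])
    have hle := condExp_indicator_setOf_le_le_add (m := MeasurableSpace.comap W0 inferInstance)
      (μ := P) (hZ n) (hZ' n) s t
    simp_rw [abs_sub_comm (Z n _)] at hle
    exact hle.mono fun ω hω => sub_le_iff_le_add.2 hω
  · obtain ⟨u, htu, hu, hub⟩ := hG.exists_gt_continuousAt_gt ht hb
    exact ((hconv u hu).add (hsmall (u - t) (sub_pos.2 htu))).tendsto_measure_ge_of_ae_le
      (fun n => condExp_indicator_setOf_le_le_add (hZ' n) (hZ n) t u) (by rwa [add_zero])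

/-- conditional Slutsky: if the conditional distribution of `Z n`
given `W₀` converges in probability to a distribution function `G` (meaning
`P[Z n ≤ t | W₀] → G t` in probability for every continuity point `t` of `G`),
and `Z' n - Z n → 0` in probability, then the conditional distribution of `Z' n`
given `W₀` also converges in probability to `G`. -/
theorem conditional_slutsky
    {Ω 𝓦 : Type*} [MeasurableSpace Ω] [MeasurableSpace 𝓦]
    (P : Measure Ω) [IsProbabilityMeasure P]
    (W0 : Ω → 𝓦) (hW0 : Measurable W0)
    (Z Z' : ℕ → Ω → ℝ) (hZ : ∀ n, Measurable (Z n)) (hZ' : ∀ n, Measurable (Z' n))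
    (G : ℝ → ℝ) (hG : Monotone G)
    (hconv : ∀ t : ℝ, ContinuousAt G t →
      TendstoInMeasure P
        (fun n => P[Set.indicator {ω | Z n ω ≤ t} (fun _ => (1 : ℝ)) |
          MeasurableSpace.comap W0 inferInstance])
        atTop (fun _ => G t))
    (hdiff : TendstoInMeasure P (fun n ω => Z' n ω - Z n ω) atTop (fun _ => (0 : ℝ))) :
    ∀ t : ℝ, ContinuousAt G t →
      TendstoInMeasure P
        (fun n => P[Set.indicator {ω | Z' n ω ≤ t} (fun _ => (1 : ℝ)) |
          MeasurableSpace.comap W0 inferInstance])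
        atTop (fun _ => G t) :=
  conditional_slutsky_general P W0 Z Z' hZ hZ' G hG hconv hdiff
end

section
/- Let ν be a probability measure on ℝ, p : ℝ → (0,1) measurable with θ = ∫ dν/(1-p) < ∞, and define Q(w;B) = p(w)1_B(w) + (1-p(w))ν(B). Then Q is a Markov transition kernel with stationary distribution dπ = dν/(θ(1-p)), and Q satisfies the reversibility (detailed balance) condition ∫_A Q(w;B)π(dw) = ∫_B Q(w;A)π(dw) for all Borel sets A, B. -/
/-!
Writing `π = f • ν`, the density `f = θ⁻¹ (1 - p)⁻¹` is chosen so that `(1 - p) • π = θ⁻¹ • ν`.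
Then `∫_A Q(w;B) π(dw) = ∫_{A ∩ B} p dπ + θ⁻¹ ν(A) ν(B)`, which is symmetric in `A` and `B`.
Stationarity is detailed balance with `A = ℝ`, since `Q(w;ℝ) = 1`.
-/

open MeasureTheory Filter
open scoped ENNReal

namespace MeasureTheory.Measure

variable {α : Type*} [MeasurableSpace α]

theorem bind_eq_self_of_detailed_balance {π : Measure α} {κ : α → Measure α}
    (hκ : Measurable κ) (hκ_univ : ∀ w, κ w Set.univ = 1)
    (hbalance : ∀ A B, MeasurableSet A → MeasurableSet B →
      ∫⁻ w in A, κ w B ∂π = ∫⁻ w in B, κ w A ∂π) :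
    π.bind κ = π := by
  ext s hs
  rw [bind_apply hs hκ.aemeasurable, ← setLIntegral_univ,
    hbalance _ _ MeasurableSet.univ hs]
  simp [hκ_univ]

theorem isProbabilityMeasure_withDensity_ofReal_inv_integral_mul {ν : Measure α} {f : α → ℝ}
    (hf : Integrable f ν) (hf_nonneg : 0 ≤ᵐ[ν] f) (hf_pos : 0 < ∫ w, f w ∂ν) :
    IsProbabilityMeasure
      (ν.withDensity fun w => ENNReal.ofReal ((∫ x, f x ∂ν)⁻¹ * f w)) := by
  constructor
  simp_rw [withDensity_apply _ MeasurableSet.univ, restrict_univ,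
    ENNReal.ofReal_mul (inv_nonneg.2 hf_pos.le)]
  rw [lintegral_const_mul' _ _ ENNReal.ofReal_ne_top,
    ← ofReal_integral_eq_lintegral_ofReal hf hf_nonneg, ← ENNReal.ofReal_mul (inv_nonneg.2 hf_pos.le),
    inv_mul_cancel₀ hf_pos.ne', ENNReal.ofReal_one]

end MeasureTheory.Measure

section MixtureKernel

variable {α : Type*} [MeasurableSpace α] {ν π : Measure α} {p : α → ℝ}

noncomputable def mixtureKernel (ν : Measure α) (p : α → ℝ) (w : α) : Measure α :=
  ENNReal.ofReal (p w) • Measure.dirac w + ENNReal.ofReal (1 - p w) • ν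

theorem mixtureKernel_apply (w : α) {s : Set α} (hs : MeasurableSet s) :
    mixtureKernel ν p w s =
      s.indicator (fun w => ENNReal.ofReal (p w)) w + ENNReal.ofReal (1 - p w) * ν s := by
  by_cases hw : w ∈ s <;> simp [mixtureKernel, Measure.dirac_apply' _ hs, hw]

theorem mixtureKernel_apply_univ [IsProbabilityMeasure ν] {w : α} (h0 : 0 ≤ p w)
    (h1 : p w ≤ 1) : mixtureKernel ν p w Set.univ = 1 := by
  rw [mixtureKernel_apply w MeasurableSet.univ, Set.indicator_of_mem (Set.mem_univ w),
    measure_univ, mul_one, ← ENNReal.ofReal_add h0 (sub_nonneg.2 h1), add_sub_cancel,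
    ENNReal.ofReal_one]

theorem measurable_mixtureKernel (hp : Measurable p) : Measurable (mixtureKernel ν p) := by
  refine Measure.measurable_of_measurable_coe _ fun s hs => ?_
  simp_rw [mixtureKernel_apply _ hs]
  exact (hp.ennreal_ofReal.indicator hs).add ((hp.const_sub 1).ennreal_ofReal.mul_const _)

theorem setLIntegral_mixtureKernel (hp : Measurable p) {c : ℝ≥0∞}
    (hπ : π.withDensity (fun w => ENNReal.ofReal (1 - p w)) = c • ν)
    {A B : Set α} (hA : MeasurableSet A) (hB : MeasurableSet B) :
    ∫⁻ w in A, mixtureKernel ν p w B ∂π =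
      ∫⁻ w in A ∩ B, ENNReal.ofReal (p w) ∂π + c * ν A * ν B := by
  simp_rw [mixtureKernel_apply _ hB]
  rw [lintegral_add_left (hp.ennreal_ofReal.indicator hB), lintegral_indicator hB,
    Measure.restrict_restrict hB, Set.inter_comm,
    lintegral_mul_const _ (hp.const_sub 1).ennreal_ofReal, ← withDensity_apply _ hA, hπ]
  rfl

theorem mixtureKernel_detailed_balance (hp : Measurable p) {c : ℝ≥0∞}
    (hπ : π.withDensity (fun w => ENNReal.ofReal (1 - p w)) = c • ν)
    {A B : Set α} (hA : MeasurableSet A) (hB : MeasurableSet B) :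
    ∫⁻ w in A, mixtureKernel ν p w B ∂π = ∫⁻ w in B, mixtureKernel ν p w A ∂π := by
  rw [setLIntegral_mixtureKernel hp hπ hA hB, setLIntegral_mixtureKernel hp hπ hB hA,
    Set.inter_comm, mul_right_comm]

end MixtureKernel

/-- with `Q(w;·) = p(w) δ_w + (1-p(w)) ν` and
`θ = ∫ dν/(1-p) < ∞`, `Q` is a Markov transition kernel with stationary
distribution `dπ = dν/(θ(1-p))`, and satisfies the detailed balance
(reversibility) condition `∫_A Q(w;B) π(dw) = ∫_B Q(w;A) π(dw)`. -/
theorem mixture_kernel_reversible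
    (ν : Measure ℝ) [IsProbabilityMeasure ν]
    (p : ℝ → ℝ) (hp : Measurable p) (hp01 : ∀ w, p w ∈ Set.Ioo (0 : ℝ) 1)
    (θ : ℝ) (hint : Integrable (fun w => (1 - p w)⁻¹) ν)
    (hθ : ∫ w, (1 - p w)⁻¹ ∂ν = θ) :
    let κ : ℝ → Measure ℝ := fun w =>
      ENNReal.ofReal (p w) • Measure.dirac w + ENNReal.ofReal (1 - p w) • ν
    let π : Measure ℝ := ν.withDensity (fun w => ENNReal.ofReal (θ⁻¹ * (1 - p w)⁻¹))
    (∀ w, κ w Set.univ = 1) ∧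
    IsProbabilityMeasure π ∧
    π.bind κ = π ∧
    (∀ A B : Set ℝ, MeasurableSet A → MeasurableSet B →
      ∫⁻ w in A, κ w B ∂π = ∫⁻ w in B, κ w A ∂π) := by
  intro κ π
  subst hθ
  have hq : ∀ w, 0 < 1 - p w := fun w => sub_pos.2 (hp01 w).2
  have hθ_pos : 0 < ∫ w, (1 - p w)⁻¹ ∂ν :=
    (integral_pos_iff_support_of_nonneg (fun w => (inv_pos.2 (hq w)).le) hint).2 <| by
      simp [Function.support, fun w => (hq w).ne']
  have hπ : π.withDensity (fun w => ENNReal.ofReal (1 - p w)) =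
      ENNReal.ofReal (∫ w, (1 - p w)⁻¹ ∂ν)⁻¹ • ν := by
    rw [← withDensity_mul _ (by fun_prop) (by fun_prop), ← withDensity_const]
    congr with w
    rw [Pi.mul_apply, ← ENNReal.ofReal_mul' (hq w).le, mul_assoc, inv_mul_cancel₀ (hq w).ne',
      mul_one]
  have hκ_univ : ∀ w, κ w Set.univ = 1 := fun w =>
    mixtureKernel_apply_univ (hp01 w).1.le (hp01 w).2.le
  have hbalance : ∀ A B : Set ℝ, MeasurableSet A → MeasurableSet B →
      ∫⁻ w in A, κ w B ∂π = ∫⁻ w in B, κ w A ∂π := fun A B hA hB =>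
    mixtureKernel_detailed_balance hp hπ hA hB
  exact ⟨hκ_univ,
    Measure.isProbabilityMeasure_withDensity_ofReal_inv_integral_mul hint
      (ae_of_all _ fun w => (inv_pos.2 (hq w)).le) hθ_pos,
    Measure.bind_eq_self_of_detailed_balance (measurable_mixtureKernel hp) hκ_univ hbalance,
    hbalance⟩
end

section
/- With p(w) = e^{-1/|w|} and π(dw) = dw/(2w²) on {|w| ≥ 1}, and g(w) = sign(w), one has ⟨g, Qⁿg⟩ = ∫_1^∞ e^{-n/w} dw/w² = (1/n)∫_0^n e^{-x} dx ~ 1/n as n → ∞. -/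
/-!
Off `0` one has `sign w * sign w = 1` and `p w ^ n = exp (-n / |w|)`, so the correlation is
`∫ exp (-n / |w|) dπ`. The integrand and the density of `π` depend on `|w|` only, so the two
half-lines fold into `∫_1^∞ exp (-n / w) / w² dw`, and `exp (-n / w) / n` is an antiderivative,
giving `(1 - exp (-n)) / n`.
-/

open MeasureTheory Filter Topology Set

lemma hasDerivAt_exp_neg_div_div {c x : ℝ} (hc : c ≠ 0) (hx : x ≠ 0) :
    HasDerivAt (fun w ↦ Real.exp (-(c / w)) / c) (Real.exp (-(c / x)) / x ^ 2) x := by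
  have hinner : HasDerivAt (fun w ↦ -(c / w)) (c / x ^ 2) x := by
    simpa [Pi.neg_def, div_eq_mul_inv, neg_mul, mul_comm] using
      ((hasDerivAt_inv hx).const_mul c).neg
  refine (hinner.exp.div_const c).congr_deriv ?_
  field_simp

lemma integral_Ioi_exp_neg_div_div_sq {a c : ℝ} (ha : 0 < a) (hc : c ≠ 0) :
    ∫ w in Ioi a, Real.exp (-(c / w)) / w ^ 2 = (1 - Real.exp (-(c / a))) / c := by
  have hderiv : ∀ x ∈ Ici a, HasDerivAt (fun w ↦ Real.exp (-(c / w)) / c)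
      (Real.exp (-(c / x)) / x ^ 2) x :=
    fun x hx ↦ hasDerivAt_exp_neg_div_div hc (ha.trans_le hx).ne'
  have hlim : Tendsto (fun w ↦ Real.exp (-(c / w)) / c) atTop (𝓝 (1 / c)) := by
    have h : Tendsto (fun w : ℝ ↦ -(c / w)) atTop (𝓝 0) := by
      simpa using (tendsto_const_nhds (x := c).div_atTop tendsto_id).neg
    simpa using ((Real.continuous_exp.tendsto 0).comp h).div_const c
  rw [integral_Ioi_of_hasDerivAt_of_nonneg' hderiv (fun _ _ ↦ by positivity) hlim]
  ring

lemma integral_Ioc_zero_exp_neg {c : ℝ} (hc : 0 ≤ c) :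
    ∫ x in Ioc 0 c, Real.exp (-x) = 1 - Real.exp (-c) := by
  rw [← intervalIntegral.integral_of_le hc, intervalIntegral.integral_comp_neg Real.exp,
    integral_exp]
  simp

lemma integral_comp_abs_withDensity_inv_two_sq (f : ℝ → ℝ) :
    ∫ w, f |w| ∂(volume.restrict {w : ℝ | 1 ≤ |w|}).withDensity
        (fun w ↦ ENNReal.ofReal (1 / (2 * w ^ 2)))
      = ∫ w in Ioi 1, f w / w ^ 2 := by
  have hdens : Measurable fun w : ℝ ↦ ENNReal.ofReal (1 / (2 * w ^ 2)) := by fun_prop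
  have hS : MeasurableSet {w : ℝ | 1 ≤ |w|} := measurableSet_le measurable_const measurable_abs
  have hfold : ∀ w, {w : ℝ | 1 ≤ |w|}.indicator
      (fun w ↦ (ENNReal.ofReal (1 / (2 * w ^ 2))).toReal • f |w|) w
      = (Ici 1).indicator (fun t ↦ f t / (2 * t ^ 2)) |w| := by
    intro w
    simp only [indicator, mem_ofPred_eq, mem_Ici, smul_eq_mul, ← sq_abs w]
    split_ifs
    · rw [ENNReal.toReal_ofReal (by positivity)]
      ring
    · rfl
  rw [integral_withDensity_eq_integral_toReal_smul hdens (ae_of_all _ fun _ ↦ ENNReal.ofReal_lt_top), ← integral_indicator hS]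
  simp_rw [hfold]
  rw [integral_comp_abs, setIntegral_indicator measurableSet_Ici,
    inter_eq_right.2 (Ici_subset_Ioi.2 zero_lt_one), integral_Ici_eq_integral_Ioi,
    ← integral_const_mul]
  congr 1 with w
  field_simp

lemma Real.sign_mul_mul_sign {w : ℝ} (hw : w ≠ 0) (a : ℝ) : Real.sign w * (a * Real.sign w) = a := by
  rcases Real.sign_apply_eq_of_ne_zero w hw with h | h <;> simp [h]

lemma tendsto_natCast_mul_one_sub_exp_neg_div :
    Tendsto (fun n : ℕ ↦ (n : ℝ) * ((1 - Real.exp (-(n : ℝ))) / n)) atTop (𝓝 1) := by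
  have hlim : Tendsto (fun n : ℕ ↦ 1 - Real.exp (-(n : ℝ))) atTop (𝓝 1) := by
    simpa using tendsto_const_nhds.sub
      (Real.tendsto_exp_neg_atTop_nhds_zero.comp tendsto_natCast_atTop_atTop)
  refine hlim.congr' ?_
  filter_upwards [eventually_ne_atTop 0] with n hn
  field_simp

/-- with `p(w) = exp(-1/|w|)`, `π(dw) = dw/(2w²)` on `{|w| ≥ 1}`,
and `g = sign`, one has `⟨g, Qⁿ g⟩ = ∫ pⁿ dπ = ∫_1^∞ e^{-n/w} dw/w²
= (1/n) ∫_0^n e^{-x} dx ∼ 1/n` as `n → ∞`. -/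
theorem sign_correlations :
    let p : ℝ → ℝ := fun w => Real.exp (-(1 / |w|))
    let π : Measure ℝ := (volume.restrict {w : ℝ | 1 ≤ |w|}).withDensity
      (fun w => ENNReal.ofReal (1 / (2 * w ^ 2)))
    (∀ n : ℕ, 1 ≤ n →
      (∫ w, Real.sign w * (p w ^ n * Real.sign w) ∂π
          = ∫ w in Set.Ioi (1 : ℝ), Real.exp (-((n : ℝ) / w)) / w ^ 2) ∧
      (∫ w in Set.Ioi (1 : ℝ), Real.exp (-((n : ℝ) / w)) / w ^ 2
          = (1 / (n : ℝ)) * ∫ x in Set.Ioc (0 : ℝ) (n : ℝ), Real.exp (-x))) ∧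
    Tendsto (fun n : ℕ =>
        (n : ℝ) * ∫ w, Real.sign w * (p w ^ n * Real.sign w) ∂π)
      atTop (𝓝 1) := by
  intro p π
  have hcorr (n : ℕ) : ∫ w, Real.sign w * (p w ^ n * Real.sign w) ∂π
      = ∫ w in Ioi 1, Real.exp (-(n / w)) / w ^ 2 := by
    rw [← integral_comp_abs_withDensity_inv_two_sq]
    refine integral_congr_ae ?_
    have hS : MeasurableSet {w : ℝ | 1 ≤ |w|} := measurableSet_le measurable_const measurable_abs
    filter_upwards [(withDensity_absolutelyContinuous _ _).ae_le (ae_restrict_mem hS)] with w hw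
    have hw0 : w ≠ 0 := by rintro rfl; norm_num at hw
    simp only [p]
    rw [Real.sign_mul_mul_sign hw0, ← Real.exp_nat_mul]
    ring_nf
  have hclosed (n : ℕ) (hn : 1 ≤ n) : ∫ w in Ioi 1, Real.exp (-(n / w)) / w ^ 2
      = (1 - Real.exp (-(n : ℝ))) / n := by
    simpa using integral_Ioi_exp_neg_div_div_sq one_pos (c := n) (by positivity)
  refine ⟨fun n hn ↦ ⟨hcorr n, ?_⟩, ?_⟩
  · rw [hclosed n hn, integral_Ioc_zero_exp_neg n.cast_nonneg]
    ring
  · refine tendsto_natCast_mul_one_sub_exp_neg_div.congr' ?_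
    filter_upwards [eventually_ge_atTop 1] with n hn
    rw [hcorr, hclosed n hn]
end

section
/- For the kernel with p(w)=e^{-1/|w|} and ν(dz) = (1-p(z))dz/(2γ_α |z|^α) on |z| ≥ 1 where 1 < α < 2 and γ_α = ∫_0^1 y^{α-2}(1-e^{-y})dy, the stationary law is π(dz) = (α-1)dz/(2|z|^α) on |z| ≥ 1, and the jump variable Y = (τ_j - τ_{j-1})·sign(W_{τ_j}) satisfies P[Y > y] ~ Γ(α)/(γ_α y^α) as y → ∞. -/
/-!
The first two claims hold for any `p < 1`: the factor `1 - p` in the density of `ν` cancels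
against `(1 - p)⁻¹`, leaving `|z|^{-α} / (2γ)`, whose mass on `{|z| ≥ 1}` is `2 / (α - 1)`.
For the tail, folding `z ↦ |z|` and substituting `y = 1/|z|` turn `∫ p^k dν` into
`γ⁻¹ ∫_0^1 (1 - e^{-y}) e^{-ky} y^{α-2} dy`; after `u = k y` this is `k^{-α} γ⁻¹` times
`∫_0^k k(1 - e^{-u/k}) e^{-u} u^{α-2} du`, and since `k(1 - e^{-u/k})` is at most `u` and tends
to `u`, dominated convergence gives `Γ(α)`.
-/

open MeasureTheory Filter Topology Set

section

open Real

theorem measurableSet_one_le_abs : MeasurableSet {z : ℝ | 1 ≤ |z|} :=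
  measurableSet_Ici.preimage measurable_abs

theorem setIntegral_one_le_abs_comp_abs (f : ℝ → ℝ) :
    ∫ z in {z : ℝ | 1 ≤ |z|}, f |z| = 2 * ∫ x in Ioi 1, f x := by
  have h : {z : ℝ | 1 ≤ |z|}.indicator (fun z => f |z|) = fun z => (Ici 1).indicator f |z| :=
    funext fun z => indicator_comp_right (x := z) abs
  rw [← integral_indicator measurableSet_one_le_abs, h,
    integral_comp_abs (f := (Ici 1).indicator f), setIntegral_indicator measurableSet_Ici,
    inter_eq_right.2 (Ici_subset_Ioi.2 zero_lt_one), integral_Ici_eq_integral_Ioi]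

theorem integrableOn_one_le_abs_comp_abs {f : ℝ → ℝ} (hf : IntegrableOn f (Ioi 1)) :
    IntegrableOn (fun z => f |z|) {z : ℝ | 1 ≤ |z|} := by
  have hg := (integrable_indicator_iff measurableSet_Ici).2
    ((integrableOn_Ici_iff_integrableOn_Ioi enorm_ne_top).2 hf)
  rw [← integrable_indicator_iff measurableSet_one_le_abs]
  refine (hg.add hg.comp_neg).congr (Eventually.of_forall fun z => ?_)
  rcases le_total 0 z with hz | hz
  · have : ¬ 1 ≤ -z := by linarith
    simp [indicator, abs_of_nonneg hz, this]
  · have : ¬ 1 ≤ z := by linarith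
    simp [indicator, abs_of_nonpos hz, this]

theorem integrableOn_one_le_abs_abs_rpow_neg {α : ℝ} (hα : 1 < α) :
    IntegrableOn (fun z : ℝ => |z| ^ (-α)) {z : ℝ | 1 ≤ |z|} :=
  integrableOn_one_le_abs_comp_abs (f := fun x => x ^ (-α))
    (integrableOn_Ioi_rpow_of_lt (by linarith) one_pos)

theorem setIntegral_one_le_abs_abs_rpow_neg {α : ℝ} (hα : 1 < α) :
    ∫ z in {z : ℝ | 1 ≤ |z|}, |z| ^ (-α) = 2 / (α - 1) := by
  rw [setIntegral_one_le_abs_comp_abs (fun x => x ^ (-α)),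
    integral_Ioi_rpow_of_lt (by linarith) one_pos, one_rpow]
  have : α - 1 ≠ 0 := by linarith
  have : -α + 1 ≠ 0 := by linarith
  field_simp
  ring

section StationaryLaw

variable {α γ : ℝ} {p : ℝ → ℝ}

theorem lintegral_inv_one_sub_withDensity (hp : Measurable p)
    (hp1 : ∀ z : ℝ, 1 ≤ |z| → p z < 1) (hα : 1 < α) (hγ : 0 ≤ γ) :
    ∫⁻ z, ENNReal.ofReal ((1 - p z)⁻¹) ∂(volume.restrict {z : ℝ | 1 ≤ |z|}).withDensity
      (fun z => ENNReal.ofReal ((1 - p z) / (2 * γ * |z| ^ α))) =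
      ENNReal.ofReal ((α - 1) * γ)⁻¹ := by
  rw [lintegral_withDensity_eq_lintegral_mul _ (by fun_prop) (by fun_prop)]
  calc ∫⁻ z in {z : ℝ | 1 ≤ |z|},
          ((fun z => ENNReal.ofReal ((1 - p z) / (2 * γ * |z| ^ α))) *
            fun z => ENNReal.ofReal ((1 - p z)⁻¹)) z
      = ∫⁻ z in {z : ℝ | 1 ≤ |z|}, ENNReal.ofReal ((2 * γ)⁻¹ * |z| ^ (-α)) := by
        refine setLIntegral_congr_fun measurableSet_one_le_abs fun z hz => ?_
        have hpz : 0 < 1 - p z := sub_pos.2 (hp1 z hz)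
        have hz0 : 0 < |z| := one_pos.trans_le hz
        rw [Pi.mul_apply, ← ENNReal.ofReal_mul (by positivity), rpow_neg hz0.le]
        congr 1
        field_simp
    _ = ENNReal.ofReal ((2 * γ)⁻¹ * ∫ z in {z : ℝ | 1 ≤ |z|}, |z| ^ (-α)) := by
        rw [← integral_const_mul, ofReal_integral_eq_lintegral_ofReal
          ((integrableOn_one_le_abs_abs_rpow_neg hα).const_mul _)
          (ae_of_all _ fun z => by positivity)]
    _ = ENNReal.ofReal ((α - 1) * γ)⁻¹ := by
        rw [setIntegral_one_le_abs_abs_rpow_neg hα]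
        congr 1
        field_simp

theorem withDensity_inv_one_sub_withDensity (hp : Measurable p)
    (hp1 : ∀ z : ℝ, 1 ≤ |z| → p z < 1) (hγ : 0 < γ) :
    ((volume.restrict {z : ℝ | 1 ≤ |z|}).withDensity
      (fun z => ENNReal.ofReal ((1 - p z) / (2 * γ * |z| ^ α)))).withDensity
      (fun z => ENNReal.ofReal ((((α - 1) * γ)⁻¹)⁻¹ * (1 - p z)⁻¹)) =
    (volume.restrict {z : ℝ | 1 ≤ |z|}).withDensity
      (fun z => ENNReal.ofReal ((α - 1) / (2 * |z| ^ α))) := by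
  rw [← withDensity_mul _ (by fun_prop) (by fun_prop)]
  refine withDensity_congr_ae
    ((ae_restrict_iff' measurableSet_one_le_abs).2 (ae_of_all _ fun z hz => ?_))
  have hpz : 0 < 1 - p z := sub_pos.2 (hp1 z hz)
  have hz0 : 0 < |z| ^ α := rpow_pos_of_pos (one_pos.trans_le hz) α
  rw [Pi.mul_apply, ← ENNReal.ofReal_mul (by positivity), inv_inv]
  congr 1
  field_simp

end StationaryLaw

theorem setIntegral_Ioi_one_comp_inv_mul_rpow (f : ℝ → ℝ) (β : ℝ) :
    ∫ x in Ioi 1, f x⁻¹ * x ^ (-β) = ∫ y in Ioo 0 1, f y * y ^ (β - 2) := by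
  have key := integral_comp_rpow_Ioi ((Ioo 0 1).indicator fun y => f y * y ^ (β - 2))
    (p := -1) (by norm_num)
  rw [setIntegral_indicator measurableSet_Ioo, inter_eq_right.2 Ioo_subset_Ioi_self] at key
  rw [← key, ← inter_eq_right.2 (Ioi_subset_Ioi zero_le_one),
    ← setIntegral_indicator measurableSet_Ioi]
  refine setIntegral_congr_fun measurableSet_Ioi fun x (hx : 0 < x) => ?_
  rw [rpow_neg_one]
  by_cases hx1 : 1 < x
  · have hinv : x⁻¹ ∈ Ioo 0 1 := ⟨inv_pos.2 hx, inv_lt_one_of_one_lt₀ hx1⟩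
    rw [indicator_of_mem (mem_Ioi.2 hx1), indicator_of_mem hinv, smul_eq_mul, inv_rpow hx.le,
      ← rpow_neg hx.le, abs_neg, abs_one, one_mul, mul_left_comm, ← rpow_add hx]
    ring_nf
  · have hinv : x⁻¹ ∉ Ioo 0 1 := fun h => hx1 ((inv_lt_one₀ hx).1 h.2)
    rw [indicator_of_notMem (mt mem_Ioi.1 hx1), indicator_of_notMem hinv, smul_zero]

theorem rpow_mul_setIntegral_Ioo_eq_setIntegral_Ioc (α : ℝ) {c : ℝ} (hc : 0 < c) :
    c ^ α * ∫ y in Ioo 0 1, (1 - exp (-y)) * exp (-(c * y)) * y ^ (α - 2) =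
      ∫ u in Ioc 0 c, c * (1 - exp (-(u / c))) * (exp (-u) * u ^ (α - 2)) := by
  have hscale := intervalIntegral.integral_comp_mul_left
    (fun u => c * (1 - exp (-(u / c))) * (exp (-u) * u ^ (α - 2))) hc.ne' (a := 0) (b := 1)
  rw [mul_zero, mul_one, smul_eq_mul] at hscale
  rw [← integral_Ioc_eq_integral_Ioo, ← intervalIntegral.integral_of_le zero_le_one,
    ← intervalIntegral.integral_of_le hc.le, ← mul_inv_cancel_left₀ hc.ne' (∫ _ in 0..c, _),
    ← hscale, ← intervalIntegral.integral_const_mul, ← intervalIntegral.integral_const_mul]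
  refine intervalIntegral.integral_congr fun y hy => ?_
  rw [uIcc_of_le zero_le_one] at hy
  have hcα : c ^ α = c ^ (α - 2) * c * c := by
    rw [← rpow_add_one hc.ne', ← rpow_add_one hc.ne']; ring_nf
  rw [mul_div_cancel_left₀ y hc.ne', mul_rpow hc.le hy.1, hcα]
  ring

theorem tendsto_mul_one_sub_exp_neg_div (u : ℝ) :
    Tendsto (fun c : ℝ => c * (1 - exp (-(u / c)))) atTop (𝓝 u) := by
  have hderiv : HasDerivAt (fun t => 1 - exp (-(u * t))) u 0 := by
    simpa using ((hasDerivAt_id 0).const_mul u).neg.exp.const_sub 1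
  refine (hderiv.tendsto_slope_zero_right.comp tendsto_inv_atTop_nhdsGT_zero).congr' ?_
  filter_upwards [eventually_gt_atTop 0] with c hc
  simp [div_eq_mul_inv]

theorem mul_one_sub_exp_neg_div_le {c : ℝ} (hc : 0 < c) (u : ℝ) :
    c * (1 - exp (-(u / c))) ≤ u :=
  calc c * (1 - exp (-(u / c))) ≤ c * (u / c) := by
        gcongr; linarith [add_one_le_exp (-(u / c))]
    _ = u := mul_div_cancel₀ u hc.ne'

theorem tendsto_setIntegral_Ioc_mul_one_sub_exp_neg {α : ℝ} (hα : 0 < α) :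
    Tendsto (fun c : ℝ => ∫ u in Ioc 0 c, c * (1 - exp (-(u / c))) * (exp (-u) * u ^ (α - 2)))
      atTop (𝓝 (Gamma α)) := by
  have hGamma : ∀ u, 0 < u → exp (-u) * u ^ (α - 1) = u * (exp (-u) * u ^ (α - 2)) :=
    fun u hu => by rw [show α - 1 = α - 2 + 1 by ring, rpow_add_one hu.ne']; ring
  have hind : ∀ c : ℝ, ∫ u in Ioc 0 c, c * (1 - exp (-(u / c))) * (exp (-u) * u ^ (α - 2)) =
      ∫ u in Ioi 0, (Ioc 0 c).indicator
        (fun u => c * (1 - exp (-(u / c))) * (exp (-u) * u ^ (α - 2))) u := fun c => by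
    rw [setIntegral_indicator measurableSet_Ioc, inter_eq_right.2 Ioc_subset_Ioi_self]
  simp_rw [hind, Gamma_eq_integral hα]
  refine tendsto_integral_filter_of_dominated_convergence _
    (Eventually.of_forall fun c => (Measurable.indicator (by fun_prop)
      measurableSet_Ioc).aestronglyMeasurable) ?_
    (GammaIntegral_convergent hα) ((ae_restrict_iff' measurableSet_Ioi).2 (ae_of_all _ ?_))
  · filter_upwards [eventually_gt_atTop 0] with c hc
    refine (ae_restrict_iff' measurableSet_Ioi).2 (ae_of_all _ fun u (hu : 0 < u) => ?_)
    have h0 : 0 ≤ 1 - exp (-(u / c)) := sub_nonneg.2 (exp_le_one_iff.2 (by simp; positivity))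
    refine (norm_indicator_le_norm_self _ _).trans ?_
    rw [norm_of_nonneg (by positivity), hGamma u hu]
    exact mul_le_mul_of_nonneg_right (mul_one_sub_exp_neg_div_le hc u) (by positivity)
  · intro u (hu : 0 < u)
    rw [hGamma u hu]
    refine ((tendsto_mul_one_sub_exp_neg_div u).mul_const _).congr' ?_
    filter_upwards [eventually_ge_atTop u] with c hc
    rw [indicator_of_mem (show u ∈ Ioc 0 c from ⟨hu, hc⟩)]

theorem integral_exp_neg_inv_abs_pow_withDensity {α γ : ℝ} (hγ : 0 ≤ γ) (k : ℕ) :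
    ∫ z, exp (-(1 / |z|)) ^ k ∂(volume.restrict {z : ℝ | 1 ≤ |z|}).withDensity
      (fun z => ENNReal.ofReal ((1 - exp (-(1 / |z|))) / (2 * γ * |z| ^ α))) =
      γ⁻¹ * ∫ y in Ioo 0 1, (1 - exp (-y)) * exp (-(k * y)) * y ^ (α - 2) := by
  rw [integral_withDensity_eq_integral_toReal_smul (by fun_prop)
    (ae_of_all _ fun _ => ENNReal.ofReal_lt_top)]
  calc ∫ z in {z : ℝ | 1 ≤ |z|}, (ENNReal.ofReal ((1 - exp (-(1 / |z|))) /
          (2 * γ * |z| ^ α))).toReal • exp (-(1 / |z|)) ^ k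
      = ∫ z in {z : ℝ | 1 ≤ |z|}, (2 * γ)⁻¹ *
          ((1 - exp (-|z|⁻¹)) * exp (-(k * |z|⁻¹)) * |z| ^ (-α)) := by
        refine setIntegral_congr_fun measurableSet_one_le_abs fun z (hz : 1 ≤ |z|) => ?_
        have hz0 : 0 < |z| := one_pos.trans_le hz
        have h0 : 0 ≤ 1 - exp (-(1 / |z|)) := sub_nonneg.2 (exp_le_one_iff.2 (by simp))
        rw [ENNReal.toReal_ofReal (by positivity), smul_eq_mul, ← exp_nat_mul, rpow_neg hz0.le,
          one_div]
        field_simp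
    _ = γ⁻¹ * ∫ y in Ioo 0 1, (1 - exp (-y)) * exp (-(k * y)) * y ^ (α - 2) := by
        rw [integral_const_mul, setIntegral_one_le_abs_comp_abs
          (fun x => (1 - exp (-x⁻¹)) * exp (-(k * x⁻¹)) * x ^ (-α)),
          setIntegral_Ioi_one_comp_inv_mul_rpow (fun y => (1 - exp (-y)) * exp (-(k * y))),
          mul_inv]
        ring

theorem tendsto_rpow_mul_integral_exp_neg_inv_abs_pow_withDensity {α γ : ℝ} (hα : 0 < α)
    (hγ : 0 ≤ γ) :
    Tendsto (fun k : ℕ => (k : ℝ) ^ α * ∫ z, exp (-(1 / |z|)) ^ k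
      ∂(volume.restrict {z : ℝ | 1 ≤ |z|}).withDensity
        (fun z => ENNReal.ofReal ((1 - exp (-(1 / |z|))) / (2 * γ * |z| ^ α)))) atTop
      (𝓝 (Gamma α / γ)) := by
  rw [div_eq_inv_mul]
  refine (((tendsto_setIntegral_Ioc_mul_one_sub_exp_neg hα).comp
    tendsto_natCast_atTop_atTop).const_mul γ⁻¹).congr' ?_
  filter_upwards [eventually_gt_atTop 0] with k hk
  rw [integral_exp_neg_inv_abs_pow_withDensity hγ, mul_left_comm,
    rpow_mul_setIntegral_Ioo_eq_setIntegral_Ioc α (Nat.cast_pos.2 hk)]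
  rfl

theorem integral_rpow_mul_one_sub_exp_neg_pos {α : ℝ} (hα : 1 < α) :
    0 < ∫ y in Ioo (0 : ℝ) 1, y ^ (α - 2) * (1 - exp (-y)) := by
  rw [← integral_Ioc_eq_integral_Ioo, ← intervalIntegral.integral_of_le zero_le_one]
  refine intervalIntegral.intervalIntegral_pos_of_pos_on
    ((intervalIntegral.intervalIntegrable_rpow' (by linarith)).mul_continuousOn (by fun_prop))
    (fun y hy => mul_pos (rpow_pos_of_pos hy.1 _) ?_) zero_lt_one
  simpa using hy.1

end

theorem stable_example_general
    (α : ℝ) (hα1 : 1 < α)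
    (γα : ℝ)
    (hγα : γα = ∫ y in Set.Ioo (0 : ℝ) 1, y ^ (α - 2) * (1 - Real.exp (-y))) :
    let p : ℝ → ℝ := fun w => Real.exp (-(1 / |w|))
    let ν : Measure ℝ := (volume.restrict {z : ℝ | 1 ≤ |z|}).withDensity
      (fun z => ENNReal.ofReal ((1 - p z) / (2 * γα * |z| ^ α)))
    let π : Measure ℝ := (volume.restrict {z : ℝ | 1 ≤ |z|}).withDensity
      (fun z => ENNReal.ofReal ((α - 1) / (2 * |z| ^ α)))
    let θ : ℝ := ((α - 1) * γα)⁻¹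
    (∫⁻ z, ENNReal.ofReal ((1 - p z)⁻¹) ∂ν = ENNReal.ofReal θ) ∧
    ν.withDensity (fun z => ENNReal.ofReal (θ⁻¹ * (1 - p z)⁻¹)) = π ∧
    Tendsto (fun k : ℕ => (k : ℝ) ^ α * ∫ z, p z ^ k ∂ν) atTop
      (𝓝 (Real.Gamma α / γα)) := by
  intro p ν π θ
  have hγ : 0 < γα := hγα ▸ integral_rpow_mul_one_sub_exp_neg_pos hα1
  have hp : Measurable p := by fun_prop
  have hp1 : ∀ z : ℝ, 1 ≤ |z| → p z < 1 := fun z hz =>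
    Real.exp_lt_one_iff.2 (neg_lt_zero.2 (one_div_pos.2 (one_pos.trans_le hz)))
  exact ⟨lintegral_inv_one_sub_withDensity hp hp1 hα1 hγ.le,
    withDensity_inv_one_sub_withDensity hp hp1 hγ,
    tendsto_rpow_mul_integral_exp_neg_inv_abs_pow_withDensity (by linarith) hγ.le⟩

/-- for the kernel with `p(w) = e^{-1/|w|}` and
`ν(dz) = (1-p(z))dz/(2 γ_α |z|^α)` on `{|z| ≥ 1}` with `1 < α < 2` and
`γ_α = ∫_0^1 y^{α-2}(1-e^{-y}) dy`, the stationary law is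
`π(dz) = (α-1)dz/(2|z|^α)` on `{|z| ≥ 1}` (with `θ = ∫ dν/(1-p) = ((α-1)γ_α)⁻¹`),
and the jump tail satisfies `P[τ > k] = ∫ p^k dν ∼ Γ(α)/(γ_α k^α)`. -/
theorem stable_example
    (α : ℝ) (hα1 : 1 < α) (hα2 : α < 2)
    (γα : ℝ)
    (hγα : γα = ∫ y in Set.Ioo (0 : ℝ) 1, y ^ (α - 2) * (1 - Real.exp (-y))) :
    let p : ℝ → ℝ := fun w => Real.exp (-(1 / |w|))
    let ν : Measure ℝ := (volume.restrict {z : ℝ | 1 ≤ |z|}).withDensity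
      (fun z => ENNReal.ofReal ((1 - p z) / (2 * γα * |z| ^ α)))
    let π : Measure ℝ := (volume.restrict {z : ℝ | 1 ≤ |z|}).withDensity
      (fun z => ENNReal.ofReal ((α - 1) / (2 * |z| ^ α)))
    let θ : ℝ := ((α - 1) * γα)⁻¹
    (∫⁻ z, ENNReal.ofReal ((1 - p z)⁻¹) ∂ν = ENNReal.ofReal θ) ∧
    ν.withDensity (fun z => ENNReal.ofReal (θ⁻¹ * (1 - p z)⁻¹)) = π ∧
    Tendsto (fun k : ℕ => (k : ℝ) ^ α * ∫ z, p z ^ k ∂ν) atTop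
      (𝓝 (Real.Gamma α / γα)) :=
  stable_example_general α hα1 γα hγα
end
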